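/- arXiv:1909.10181 — 7 statements merged into one kernel-verified Lean document; each statement's English description precedes it below -/
import Mathlib

section
/- For any group G, any matrix a ∈ GL_s(ℤ) acting on ℤ^s, and any n ≥ 1, the (n+1)-st term of the lower central series of the semidirect product ℤ ⋉_a ℤ^s equals 0 ⋉ b^n(ℤ^s), where b = a - 1 viewed as an endomorphism of ℤ^s. -/
open scoped commutatorElement

/-- The additive automorphism of `R^s` given by an invertible matrix. -/
def Matrix.unitsAddAut {s : ℕ} {R : Type*} [CommRing R] (A : (Matrix (Fin s) (Fin s) R)ˣ) :
    (Fin s → R) ≃+ (Fin s → R) where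
  toFun := (A : Matrix (Fin s) (Fin s) R).mulVec
  invFun := (↑A⁻¹ : Matrix (Fin s) (Fin s) R).mulVec
  left_inv v := by simp [Matrix.mulVec_mulVec, ← Units.val_mul]
  right_inv v := by simp [Matrix.mulVec_mulVec, ← Units.val_mul]
  map_add' := Matrix.mulVec_add _

/-- The action of `ℤ` on `Multiplicative R^s` with the generator `1` acting by
an invertible matrix `A`. -/
def zMatAction {s : ℕ} {R : Type*} [CommRing R] (A : (Matrix (Fin s) (Fin s) R)ˣ) :
    Multiplicative ℤ →* MulAut (Multiplicative (Fin s → R)) :=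
  zpowersHom _ (AddEquiv.toMultiplicative (Matrix.unitsAddAut A))

/-- The semidirect product `ℤ ⋉_A R^s` (written multiplicatively). -/
abbrev ZSd {s : ℕ} {R : Type*} [CommRing R] (A : (Matrix (Fin s) (Fin s) R)ˣ) : Type _ :=
  Multiplicative (Fin s → R) ⋊[zMatAction A] Multiplicative ℤ

variable {s : ℕ} (A : (Matrix (Fin s) (Fin s) ℤ)ˣ)

lemma zMatAction_apply (k : ℤ) (v : Fin s → ℤ) :
    zMatAction A (Multiplicative.ofAdd k) (Multiplicative.ofAdd v)
      = Multiplicative.ofAdd ((↑(A ^ k) : Matrix (Fin s) (Fin s) ℤ).mulVec v) := by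
  have h1 : ∀ w : Fin s → ℤ, zMatAction A (Multiplicative.ofAdd 1) (Multiplicative.ofAdd w)
      = Multiplicative.ofAdd ((↑A : Matrix (Fin s) (Fin s) ℤ).mulVec w) := by
    intro w; simp [zMatAction, Matrix.unitsAddAut]
  have h1' : ∀ w : Fin s → ℤ, zMatAction A (Multiplicative.ofAdd (-1)) (Multiplicative.ofAdd w)
      = Multiplicative.ofAdd ((↑(A⁻¹) : Matrix (Fin s) (Fin s) ℤ).mulVec w) := by
    intro w
    simp only [zMatAction, zpowersHom_apply, toAdd_ofAdd, zpow_neg, zpow_one]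
    rfl
  revert v
  induction k using Int.induction_on with
  | zero => intro v; simp [zMatAction, Matrix.unitsAddAut]
  | succ i ih =>
      intro v
      have h2 : Multiplicative.ofAdd ((i : ℤ) + 1)
          = Multiplicative.ofAdd (i : ℤ) * Multiplicative.ofAdd (1 : ℤ) := rfl
      rw [h2, map_mul, MulAut.mul_apply, h1, ih, Matrix.mulVec_mulVec]
      congr 1
  | pred i ih =>
      intro v
      have h2 : Multiplicative.ofAdd (-(i : ℤ) - 1)
          = Multiplicative.ofAdd (-(i : ℤ)) * Multiplicative.ofAdd (-1 : ℤ) := by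
        rw [← ofAdd_add]; ring_nf
      rw [h2, map_mul, MulAut.mul_apply, h1', ih, Matrix.mulVec_mulVec]
      congr 1
      rw [← Units.val_mul, ← zpow_sub_one]

lemma commutator_mk (v w : Fin s → ℤ) (m k : ℤ) :
    ⁅(SemidirectProduct.mk (φ := zMatAction A) (.ofAdd v) (.ofAdd m)),
      (SemidirectProduct.mk (φ := zMatAction A) (.ofAdd w) (.ofAdd k))⁆ =
      SemidirectProduct.mk (φ := zMatAction A)
        (.ofAdd (v + (↑(A^m) : Matrix (Fin s) (Fin s) ℤ).mulVec w
          - (↑(A^k) : Matrix (Fin s) (Fin s) ℤ).mulVec v - w)) 1 := by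
  ext
  · simp only [commutatorElement_def, SemidirectProduct.mul_left, SemidirectProduct.inv_left,
      SemidirectProduct.mul_right, SemidirectProduct.inv_right]
    simp only [← ofAdd_neg, ← ofAdd_add, zMatAction_apply, Matrix.mulVec_mulVec,
      ← Units.val_mul, ← zpow_add, ← zpow_neg, Matrix.mulVec_neg]
    have e2 : m + k + -m + -k = 0 := by ring
    have e1 : m + k + -m = k := by ring
    rw [e2, e1]
    simp [sub_eq_add_neg]
  · simp [commutatorElement_def]

lemma mulVecLin_pow (X : Matrix (Fin s) (Fin s) ℤ) (n : ℕ) :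
    (Matrix.mulVecLin X) ^ n = Matrix.mulVecLin (X ^ n) := by
  induction n with
  | zero => simp [Matrix.mulVecLin_one, Module.End.one_eq_id]
  | succ n ih => rw [pow_succ, pow_succ, ih, Matrix.mulVecLin_mul]; rfl

lemma commute_sub_one_zpow (k : ℤ) :
    Commute ((↑A : Matrix (Fin s) (Fin s) ℤ) - 1) (↑(A ^ k) : Matrix (Fin s) (Fin s) ℤ) := by
  have h : Commute (↑A : Matrix (Fin s) (Fin s) ℤ) (↑(A ^ k) : Matrix (Fin s) (Fin s) ℤ) :=
    ((Commute.refl A).zpow_right k).map (Units.coeHom _)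
  exact h.sub_left (Commute.one_left _)

lemma zpow_sub_one_dvd (k : ℤ) :
    ∃ C : Matrix (Fin s) (Fin s) ℤ,
      (↑(A ^ k) : Matrix (Fin s) (Fin s) ℤ) - 1 = ((↑A : Matrix (Fin s) (Fin s) ℤ) - 1) * C ∧
      Commute ((↑A : Matrix (Fin s) (Fin s) ℤ) - 1) C := by
  induction k using Int.induction_on with
  | zero => exact ⟨0, by simp, Commute.zero_right _⟩
  | succ i ih =>
      obtain ⟨C, hC, hcomm⟩ := ih
      refine ⟨C + ↑(A ^ (i : ℤ)), ?_, hcomm.add_right (commute_sub_one_zpow A _)⟩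
      have h := commute_sub_one_zpow A (i : ℤ)
      have hv : (↑(A ^ ((i:ℤ)+1)) : Matrix (Fin s) (Fin s) ℤ) = (↑(A ^ (i:ℤ)) : Matrix (Fin s) (Fin s) ℤ) * (↑A : Matrix (Fin s) (Fin s) ℤ) := by
        rw [← Units.val_mul, ← zpow_add_one]
      rw [mul_add, ← hC, h.eq, hv]
      noncomm_ring
  | pred i ih =>
      obtain ⟨C, hC, hcomm⟩ := ih
      refine ⟨C - ↑(A ^ (-(i : ℤ) - 1)), ?_, hcomm.sub_right (commute_sub_one_zpow A _)⟩
      have h := commute_sub_one_zpow A (-(i : ℤ) - 1)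
      have hv : (↑(A ^ (-(i:ℤ))) : Matrix (Fin s) (Fin s) ℤ) = (↑(A ^ (-(i:ℤ) - 1)) : Matrix (Fin s) (Fin s) ℤ) * (↑A : Matrix (Fin s) (Fin s) ℤ) := by
        rw [← Units.val_mul, ← zpow_add_one]; norm_num
      rw [mul_sub, ← hC, h.eq, hv]
      noncomm_ring

lemma commutator_eq (g h : ZSd A) :
    ⁅g, h⁆ = SemidirectProduct.mk (φ := zMatAction A)
      (.ofAdd (g.left.toAdd
        + (↑(A ^ g.right.toAdd) : Matrix (Fin s) (Fin s) ℤ).mulVec h.left.toAdd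
        - (↑(A ^ h.right.toAdd) : Matrix (Fin s) (Fin s) ℤ).mulVec g.left.toAdd
        - h.left.toAdd)) 1 := by
  obtain ⟨v, m⟩ := g
  obtain ⟨w, k⟩ := h
  simpa using commutator_mk A v.toAdd w.toAdd m.toAdd k.toAdd

-- membership lemma
lemma mem_K_iff (m : ℕ) (x : ZSd A) :
    x ∈ Subgroup.map SemidirectProduct.inl
        (AddSubgroup.toSubgroup
          (LinearMap.range
            ((Matrix.mulVecLin ((A : Matrix (Fin s) (Fin s) ℤ) - 1)) ^ m)).toAddSubgroup) ↔
    ∃ u : Fin s → ℤ, SemidirectProduct.mk (φ := zMatAction A)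
        (.ofAdd ((((A : Matrix (Fin s) (Fin s) ℤ) - 1) ^ m).mulVec u)) 1 = x := by
  rw [mulVecLin_pow]
  constructor
  · rintro ⟨y, hy, rfl⟩
    obtain ⟨u, hu⟩ := hy
    refine ⟨u, ?_⟩
    ext
    · rw [SemidirectProduct.left_inl]
      simp only [Matrix.mulVecLin_apply] at hu
      rw [hu]; rfl
    · rw [SemidirectProduct.right_inl]
  · rintro ⟨u, rfl⟩
    refine ⟨.ofAdd ((((A : Matrix (Fin s) (Fin s) ℤ) - 1) ^ m).mulVec u), ⟨u, rfl⟩, ?_⟩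
    ext
    · rw [SemidirectProduct.left_inl]
    · rw [SemidirectProduct.right_inl]


/-- For `a ∈ GL_s(ℤ)` acting on `ℤ^s` and any `n ≥ 1`, the `(n+1)`-st term
of the lower central series of `ℤ ⋉_a ℤ^s` (i.e. `γ_{n+1} = lowerCentralSeries _ n`)
equals `0 ⋉ b^n(ℤ^s)`, where `b = a - 1`. -/
theorem stmt0 (s : ℕ) (A : (Matrix (Fin s) (Fin s) ℤ)ˣ) (n : ℕ) (hn : 1 ≤ n) :
    (⊤ : Subgroup (ZSd A)).lowerCentralSeries n =
      Subgroup.map SemidirectProduct.inl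
        (AddSubgroup.toSubgroup
          (LinearMap.range
            ((Matrix.mulVecLin ((A : Matrix (Fin s) (Fin s) ℤ) - 1)) ^ n)).toAddSubgroup) := by
  induction n with
  | zero => omega
  | succ n ih =>
    have hsucc : (⊤ : Subgroup (ZSd A)).lowerCentralSeries (n + 1)
        = ⁅(⊤ : Subgroup (ZSd A)).lowerCentralSeries n, (⊤ : Subgroup (ZSd A))⁆ := rfl
    rw [hsucc]
    rcases Nat.eq_zero_or_pos n with h0 | hpos
    · subst h0
      rw [Subgroup.lowerCentralSeries_zero]
      apply le_antisymm
      · rw [Subgroup.commutator_le]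
        intro g _ h _
        rw [mem_K_iff, commutator_eq]
        obtain ⟨C1, hC1, _⟩ := zpow_sub_one_dvd A g.right.toAdd
        obtain ⟨C2, hC2, _⟩ := zpow_sub_one_dvd A h.right.toAdd
        refine ⟨C1.mulVec h.left.toAdd - C2.mulVec g.left.toAdd, ?_⟩
        congr 2
        rw [pow_one, Matrix.mulVec_sub, Matrix.mulVec_mulVec, Matrix.mulVec_mulVec,
          ← hC1, ← hC2, Matrix.sub_mulVec, Matrix.sub_mulVec, Matrix.one_mulVec,
          Matrix.one_mulVec]
        abel
      · intro x hx
        rw [mem_K_iff] at hx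
        obtain ⟨u, rfl⟩ := hx
        have hc := commutator_mk A 0 u 1 0
        have h2 : (((A : Matrix (Fin s) (Fin s) ℤ) - 1) ^ 1).mulVec u
            = (0 : Fin s → ℤ) + (↑(A ^ (1 : ℤ)) : Matrix (Fin s) (Fin s) ℤ).mulVec u
              - (↑(A ^ (0 : ℤ)) : Matrix (Fin s) (Fin s) ℤ).mulVec 0 - u := by
          simp [Matrix.sub_mulVec, Matrix.one_mulVec]
        rw [h2, ← hc]
        exact Subgroup.commutator_mem_commutator (Subgroup.mem_top _) (Subgroup.mem_top _)
    · rw [ih hpos]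
      apply le_antisymm
      · rw [Subgroup.commutator_le]
        intro g hg h _
        rw [mem_K_iff] at hg
        obtain ⟨u, rfl⟩ := hg
        rw [mem_K_iff, commutator_eq]
        obtain ⟨C, hC, hcomm⟩ := zpow_sub_one_dvd A h.right.toAdd
        refine ⟨-(C.mulVec u), ?_⟩
        have hmat : (((A : Matrix (Fin s) (Fin s) ℤ) - 1) ^ (n + 1)) * C = ((↑(A ^ h.right.toAdd) : Matrix (Fin s) (Fin s) ℤ) - 1) * ((A : Matrix (Fin s) (Fin s) ℤ) - 1) ^ n := by
          have hcn : Commute (((A : Matrix (Fin s) (Fin s) ℤ) - 1) * C) (((A : Matrix (Fin s) (Fin s) ℤ) - 1) ^ n) :=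
            ((Commute.refl ((A : Matrix (Fin s) (Fin s) ℤ) - 1)).mul_left hcomm.symm).pow_right n
          rw [pow_succ, mul_assoc, ← hcn.eq, hC]
        congr 2
        simp only [toAdd_ofAdd, toAdd_one, zpow_zero, Units.val_one, Matrix.one_mulVec]
        rw [Matrix.mulVec_neg, Matrix.mulVec_mulVec, hmat, ← Matrix.mulVec_mulVec,
          Matrix.sub_mulVec, Matrix.one_mulVec, neg_sub]
        abel
      · intro x hx
        rw [mem_K_iff] at hx
        obtain ⟨u, rfl⟩ := hx
        have hc := commutator_mk A (-((((A : Matrix (Fin s) (Fin s) ℤ) - 1) ^ n).mulVec u)) 0 0 1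
        have h2 : (((A : Matrix (Fin s) (Fin s) ℤ) - 1) ^ (n + 1)).mulVec u
            = -((((A : Matrix (Fin s) (Fin s) ℤ) - 1) ^ n).mulVec u)
              + (↑(A ^ (0 : ℤ)) : Matrix (Fin s) (Fin s) ℤ).mulVec 0
              - (↑(A ^ (1 : ℤ)) : Matrix (Fin s) (Fin s) ℤ).mulVec (-((((A : Matrix (Fin s) (Fin s) ℤ) - 1) ^ n).mulVec u))
              - 0 := by
          simp only [zpow_zero, Units.val_one, Matrix.mulVec_zero, add_zero, sub_zero, zpow_one,
            Matrix.mulVec_neg, sub_neg_eq_add]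
          rw [pow_succ', ← Matrix.mulVec_mulVec, Matrix.sub_mulVec, Matrix.one_mulVec]
          abel
        rw [h2, ← hc]
        refine Subgroup.commutator_mem_commutator ?_ (Subgroup.mem_top _)
        rw [mem_K_iff]
        exact ⟨-u, by simp [Matrix.mulVec_neg]⟩
end

section
/- For odd k and any n ≥ 1, the group ℤ ⋉_{a_k} (ℤ/2ⁿ)² is nilpotent, where a_k is the automorphism of (ℤ/2ⁿ)² induced by the matrix with rows (-1,k),(0,-1). -/
/-- The matrix `a_k = !![-1, k; 0, -1]` as a unit (its inverse is `!![-1, -k; 0, -1]`). -/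
def akUnit (R : Type*) [CommRing R] (k : ℤ) : (Matrix (Fin 2) (Fin 2) R)ˣ where
  val := !![-1, (k : R); 0, -1]
  inv := !![-1, -(k : R); 0, -1]
  val_inv := by rw [Matrix.mul_fin_two, Matrix.one_fin_two]; norm_num
  inv_val := by rw [Matrix.mul_fin_two, Matrix.one_fin_two]; norm_num

lemma upperTri_pow {R : Type*} [CommRing R] (c : R) (m : ℕ) :
    (!![1, c; 0, 1] : Matrix (Fin 2) (Fin 2) R) ^ m = !![1, m * c; 0, 1] := by
  induction m with
  | zero => simp [Matrix.one_fin_two]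
  | succ m ih =>
    rw [pow_succ, ih, Matrix.mul_fin_two]
    push_cast
    ring_nf

lemma akUnit_sq {R : Type*} [CommRing R] (k : ℤ) :
    ((akUnit R k : (Matrix (Fin 2) (Fin 2) R)ˣ) : Matrix (Fin 2) (Fin 2) R) ^ 2
      = !![1, -(2 * (k : R)); 0, 1] := by
  rw [sq, akUnit]
  rw [Matrix.mul_fin_two]
  norm_num
  ring

lemma akUnit_pow (k : ℤ) (n : ℕ) (hn : 1 ≤ n) :
    (akUnit (ZMod (2 ^ n)) k) ^ (2 ^ n) = 1 := by
  obtain ⟨m, rfl⟩ : ∃ m, n = m + 1 := ⟨n - 1, by omega⟩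
  apply Units.ext
  push_cast [Units.val_pow_eq_pow_val]
  rw [show 2 ^ (m + 1) = 2 ^ m * 2 by rw [pow_succ], pow_mul', akUnit_sq, upperTri_pow]
  have h := ZMod.natCast_self (2 ^ (m + 1))
  push_cast at h
  have key : ((2 ^ m : ℕ) : ZMod (2 ^ (m + 1))) * -(2 * (k : ZMod (2 ^ (m + 1)))) = 0 := by
    push_cast
    linear_combination (-(k : ZMod (2 ^ (m + 1)))) * h
  rw [Matrix.one_fin_two]
  congr

lemma gen_pow_apply {s : ℕ} {R : Type*} [CommRing R] (A : (Matrix (Fin s) (Fin s) R)ˣ)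
    (m : ℕ) (v : Multiplicative (Fin s → R)) :
    ((AddEquiv.toMultiplicative (Matrix.unitsAddAut A)) ^ m) v
      = Multiplicative.ofAdd ((((A : Matrix (Fin s) (Fin s) R)) ^ m).mulVec v.toAdd) := by
  induction m generalizing v with
  | zero => simp [Matrix.one_mulVec]
  | succ m ih =>
    rw [pow_succ, MulAut.mul_apply, ih,
      show Multiplicative.toAdd ((AddEquiv.toMultiplicative (Matrix.unitsAddAut A)) v)
        = (A : Matrix (Fin s) (Fin s) R).mulVec v.toAdd from rfl,
      Matrix.mulVec_mulVec, ← pow_succ]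

lemma gen_pow_eq_one {s : ℕ} {R : Type*} [CommRing R] (A : (Matrix (Fin s) (Fin s) R)ˣ)
    (m : ℕ) (hm : A ^ m = 1) :
    (AddEquiv.toMultiplicative (Matrix.unitsAddAut A)) ^ m = 1 := by
  ext v
  rw [gen_pow_apply, ← Units.val_pow_eq_pow_val, hm]
  simp [Matrix.one_mulVec]

section Main

variable (k : ℤ) (n : ℕ)

/-- For odd `k` and any `n ≥ 1`, the group `ℤ ⋉_{a_k} (ℤ/2ⁿ)²` is
nilpotent, where `a_k` acts via the reduction mod `2ⁿ` of `!![-1, k; 0, -1]`. -/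
theorem stmt5 (k : ℤ) (hk : Odd k) (n : ℕ) (hn : 1 ≤ n) :
    Group.IsNilpotent (ZSd (akUnit (ZMod (2 ^ n)) k)) := by
  set R := ZMod (2 ^ n) with hR
  set A := akUnit R k with hAdef
  set α := AddEquiv.toMultiplicative (Matrix.unitsAddAut A) with hαdef
  have hα1 : α ^ (2 ^ n) = 1 := gen_pow_eq_one A (2 ^ n) (akUnit_pow k n hn)
  have hφ_apply : ∀ r : Multiplicative ℤ, zMatAction A r = α ^ r.toAdd := fun r =>
    zpowersHom_apply _ _ _
  -- the action of any `2^n`-th power is trivial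
  have hφ_triv : ∀ r : Multiplicative ℤ, (zMatAction A r) ^ (2 ^ n) = 1 := by
    intro r
    rw [hφ_apply, ← zpow_natCast (α ^ r.toAdd), ← zpow_mul, mul_comm, zpow_mul,
      zpow_natCast, hα1, one_zpow]
  have hφ_pow : ∀ x : ℤ, zMatAction A (Multiplicative.ofAdd ((2 ^ n : ℤ) * x)) = 1 := by
    intro x
    rw [hφ_apply, toAdd_ofAdd, zpow_mul]
    have : α ^ ((2 : ℤ) ^ n) = 1 := by
      rw [show ((2 : ℤ) ^ n) = ((2 ^ n : ℕ) : ℤ) by push_cast; ring, zpow_natCast, hα1]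
    rw [this, one_zpow]
  -- every element of the vector part has exponent dividing 2^n
  have hV : ∀ w : Multiplicative (Fin 2 → R), w ^ (2 ^ n) = 1 := by
    intro w
    rw [← ofAdd_toAdd w, ← ofAdd_nsmul]
    convert ofAdd_zero using 2
    funext i
    simp [nsmul_eq_mul, ZMod.natCast_self]
  -- the central element t
  set t : ZSd A := SemidirectProduct.inr (Multiplicative.ofAdd ((2 : ℤ) ^ n)) with htdef
  have ht_central : t ∈ Subgroup.center (ZSd A) := by
    rw [Subgroup.mem_center_iff]
    intro g
    refine SemidirectProduct.ext ?_ ?_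
    · rw [SemidirectProduct.mul_left, SemidirectProduct.mul_left, htdef,
        SemidirectProduct.left_inr, SemidirectProduct.right_inr, map_one, mul_one,
        show ((2 : ℤ) ^ n) = (2 ^ n : ℤ) * 1 by ring, hφ_pow]
      simp
    · rw [SemidirectProduct.mul_right, SemidirectProduct.mul_right, mul_comm]
  set K := Subgroup.zpowers t with hKdef
  have hK_le : K ≤ Subgroup.center (ZSd A) := by
    rw [hKdef, Subgroup.zpowers_le]; exact ht_central
  haveI hKn : K.Normal := by
    constructor
    intro x hx g
    have hxc := Subgroup.mem_center_iff.mp (hK_le hx) g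
    rw [hxc, mul_assoc, mul_inv_cancel, mul_one]
    exact hx
  -- membership criterion for K
  have hinrK : ∀ d : ℤ, (2 ^ n : ℤ) ∣ d →
      SemidirectProduct.inr (Multiplicative.ofAdd d) ∈ K := by
    rintro d ⟨q, rfl⟩
    rw [hKdef, Subgroup.mem_zpowers_iff]
    refine ⟨q, ?_⟩
    rw [htdef, ← map_zpow]
    congr 1
    rw [← ofAdd_zsmul]
    congr 1
    rw [smul_eq_mul]
    ring
  refine @isNilpotent_of_ker_le_center _ _ _ _ (QuotientGroup.mk' K) ?_ ?_
  · rw [QuotientGroup.ker_mk']; exact hK_le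
  · -- the quotient is a finite 2-group
    -- powers of elements with trivial action
    have hpow_left : ∀ z : ZSd A, zMatAction A z.right = 1 → ∀ j : ℕ,
        (z ^ j).left = z.left ^ j := by
      intro z hz j
      induction j with
      | zero => simp
      | succ j ih =>
        rw [pow_succ, SemidirectProduct.mul_left, ih,
          show (z ^ j).right = z.right ^ j from map_pow SemidirectProduct.rightHom z j,
          map_pow, hz, one_pow, MulAut.one_apply, pow_succ]
    -- the key: x ^ (2 ^ (2 * n)) ∈ K for every x
    have hkey : ∀ x : ZSd A, x ^ (2 ^ (2 * n)) ∈ K := by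
      intro x
      set z := x ^ (2 ^ n) with hzdef
      have hzr : z.right = x.right ^ (2 ^ n) := map_pow SemidirectProduct.rightHom x _
      have hz : zMatAction A z.right = 1 := by rw [hzr, map_pow, hφ_triv]
      have hx2 : x ^ (2 ^ (2 * n)) = z ^ (2 ^ n) := by
        rw [hzdef, ← pow_mul, ← pow_add, two_mul]
      have hleft : (z ^ (2 ^ n)).left = 1 := by
        rw [hpow_left z hz, hV]
      have : z ^ (2 ^ n) = SemidirectProduct.inr ((z ^ (2 ^ n)).right) := by
        conv_lhs => rw [← SemidirectProduct.inl_left_mul_inr_right (z ^ (2 ^ n))]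
        rw [hleft, map_one, one_mul]
      rw [hx2, this]
      have hzr2 : (z ^ (2 ^ n)).right = Multiplicative.ofAdd
          ((2 ^ (2 * n) : ℕ) • Multiplicative.toAdd x.right) := by
        rw [show (z ^ (2 ^ n)).right = z.right ^ (2 ^ n) from
          map_pow SemidirectProduct.rightHom z _, hzr, ← pow_mul, ← pow_add, two_mul,
          ← ofAdd_toAdd (x.right ^ (2 ^ (n + n))), toAdd_pow]
      rw [hzr2]
      apply hinrK
      refine ⟨Multiplicative.toAdd x.right * 2 ^ n, ?_⟩
      push_cast
      ring
    haveI hfin : Finite (ZSd A ⧸ K) := by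
      refine Finite.of_surjective
        (f := fun p : (Fin 2 → R) × ZMod (2 ^ n) =>
          (QuotientGroup.mk ⟨Multiplicative.ofAdd p.1,
            Multiplicative.ofAdd ((p.2.val : ℤ))⟩ : ZSd A ⧸ K)) ?_
      intro q
      induction q using QuotientGroup.induction_on with
      | H x =>
        refine ⟨⟨Multiplicative.toAdd x.left,
          ((Multiplicative.toAdd x.right : ℤ) : ZMod (2 ^ n))⟩, ?_⟩
        rw [QuotientGroup.eq]
        set a : ZSd A := ⟨Multiplicative.ofAdd (Multiplicative.toAdd x.left),
          Multiplicative.ofAdd ((((Multiplicative.toAdd x.right : ℤ) :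
            ZMod (2 ^ n)).val : ℤ))⟩ with hadef
        have hal : a.left = x.left := by simp [hadef]
        have h1 : (a⁻¹ * x).left = 1 := by
          rw [SemidirectProduct.mul_left, SemidirectProduct.inv_left,
            SemidirectProduct.inv_right, ← map_mul, ← hal, inv_mul_cancel, map_one]
        have h2 : a⁻¹ * x = SemidirectProduct.inr ((a⁻¹ * x).right) := by
          conv_lhs => rw [← SemidirectProduct.inl_left_mul_inr_right (a⁻¹ * x)]
          rw [h1, map_one, one_mul]
        rw [h2]
        have h3 : (a⁻¹ * x).right = Multiplicative.ofAdd
            (Multiplicative.toAdd x.right -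
              ((((Multiplicative.toAdd x.right : ℤ) : ZMod (2 ^ n)).val : ℤ))) := by
          rw [SemidirectProduct.mul_right, SemidirectProduct.inv_right, hadef]
          rw [← ofAdd_toAdd (Multiplicative.ofAdd _)⁻¹, toAdd_inv, toAdd_ofAdd,
            ← ofAdd_toAdd x.right, ← ofAdd_add]
          congr 1
          simp only [toAdd_ofAdd]
          ring
        rw [h3]
        apply hinrK
        rw [show (2 ^ n : ℤ) = ((2 ^ n : ℕ) : ℤ) by push_cast; ring]
        rw [← ZMod.intCast_zmod_eq_zero_iff_dvd]
        push_cast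
        simp [ZMod.intCast_cast, ZMod.natCast_val]
    haveI : Fact (Nat.Prime 2) := ⟨Nat.prime_two⟩
    apply IsPGroup.isNilpotent (p := 2)
    intro g
    refine ⟨2 * n, ?_⟩
    induction g using QuotientGroup.induction_on with
    | H x =>
      rw [← QuotientGroup.mk_pow (N := K) x (2 ^ (2 * n)), QuotientGroup.eq_one_iff]
      exact hkey x

end Main
end

section
/- Let k be an odd integer and let N⊗ℤ_2 be the group with underlying set ℤ_2³ and multiplication (s,t,u)·(s',t',u') = (s+s', t+t', u+u'-ts'). Then the map (s,t,u) ↦ (-s+kt, -t, u + k·t(t-1)/2) is a well-defined automorphism of N⊗ℤ_2. -/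
/-- The Heisenberg-type group `N ⊗ R`: underlying set `R × R × R` with multiplication
`(s,t,u)·(s',t',u') = (s+s', t+t', u+u'-ts')`. -/
def Heis (R : Type*) [CommRing R] : Type _ := R × R × R

namespace Heis

variable {R : Type*} [CommRing R]

/-- Constructor for elements of `Heis R`. -/
def mk (s t u : R) : Heis R := (s, t, u)

instance : Mul (Heis R) :=
  ⟨fun a b => (a.1 + b.1, a.2.1 + b.2.1, a.2.2 + b.2.2 - a.2.1 * b.1)⟩

instance : One (Heis R) := ⟨((0 : R), (0 : R), (0 : R))⟩

instance : Inv (Heis R) := ⟨fun a => (-a.1, -a.2.1, -a.2.2 - a.2.1 * a.1)⟩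

instance instGroup : Group (Heis R) where
  mul_assoc a b c := by
    refine Prod.ext ?_ (Prod.ext ?_ ?_)
    · show a.1 + b.1 + c.1 = a.1 + (b.1 + c.1); ring
    · show a.2.1 + b.2.1 + c.2.1 = a.2.1 + (b.2.1 + c.2.1); ring
    · show a.2.2 + b.2.2 - a.2.1 * b.1 + c.2.2 - (a.2.1 + b.2.1) * c.1 =
        a.2.2 + (b.2.2 + c.2.2 - b.2.1 * c.1) - a.2.1 * (b.1 + c.1)
      ring
  one_mul a := by
    refine Prod.ext ?_ (Prod.ext ?_ ?_)
    · show (0 : R) + a.1 = a.1; ring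
    · show (0 : R) + a.2.1 = a.2.1; ring
    · show (0 : R) + a.2.2 - 0 * a.1 = a.2.2; ring
  mul_one a := by
    refine Prod.ext ?_ (Prod.ext ?_ ?_)
    · show a.1 + 0 = a.1; ring
    · show a.2.1 + 0 = a.2.1; ring
    · show a.2.2 + 0 - a.2.1 * 0 = a.2.2; ring
  inv_mul_cancel a := by
    refine Prod.ext ?_ (Prod.ext ?_ ?_)
    · show -a.1 + a.1 = 0; ring
    · show -a.2.1 + a.2.1 = 0; ring
    · show -a.2.2 - a.2.1 * a.1 + a.2.2 - -a.2.1 * a.1 = 0; ring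

end Heis

/-! The linear part `(s, t) ↦ (-s + K t, -t)` respects the product up to an extra term `K t t'`
in the last coordinate, which is exactly the failure of additivity of `t ↦ K t (t - 1) / 2`;
adding the latter to `u` therefore gives a homomorphism. In `ℤ₂` the half of `t (t - 1)` exists
because `t (t - 1)` vanishes in `ZMod 2`, and is unique because `2` is not a zero divisor. -/

namespace Heis

variable {R : Type*} [CommRing R]

def twistEquiv (K : R) (q : R → R) (hq : ∀ a b, q (a + b) = q a + q b + a * b) :
    Heis R ≃* Heis R where
  toFun a := mk (-a.1 + K * a.2.1) (-a.2.1) (a.2.2 + K * q a.2.1)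
  invFun a := mk (-a.1 - K * a.2.1) (-a.2.1) (a.2.2 - K * q (-a.2.1))
  left_inv a := by
    refine Prod.ext ?_ (Prod.ext ?_ ?_)
    · show -(-a.1 + K * a.2.1) - K * -a.2.1 = a.1; ring
    · show - -a.2.1 = a.2.1; ring
    · show a.2.2 + K * q a.2.1 - K * q (- -a.2.1) = a.2.2; rw [neg_neg]; ring
  right_inv a := by
    refine Prod.ext ?_ (Prod.ext ?_ ?_)
    · show -(-a.1 - K * a.2.1) + K * -a.2.1 = a.1; ring
    · show - -a.2.1 = a.2.1; ring
    · show a.2.2 - K * q (-a.2.1) + K * q (-a.2.1) = a.2.2; ring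
  map_mul' a b := by
    refine Prod.ext ?_ (Prod.ext ?_ ?_)
    · show -(a.1 + b.1) + K * (a.2.1 + b.2.1) = (-a.1 + K * a.2.1) + (-b.1 + K * b.2.1); ring
    · show -(a.2.1 + b.2.1) = -a.2.1 + -b.2.1; ring
    · show a.2.2 + b.2.2 - a.2.1 * b.1 + K * q (a.2.1 + b.2.1) =
        (a.2.2 + K * q a.2.1) + (b.2.2 + K * q b.2.1) - (-a.2.1) * (-b.1 + K * b.2.1)
      rw [hq]; ring

end Heis

theorem add_of_two_mul_eq_mul_sub_one {R : Type*} [CommRing R] (h2 : IsLeftRegular (2 : R))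
    {q : R → R} (hq : ∀ t, 2 * q t = t * (t - 1)) (a b : R) :
    q (a + b) = q a + q b + a * b :=
  h2 <| by linear_combination hq (a + b) - hq a - hq b

theorem PadicInt.two_dvd_mul_sub_one (t : ℤ_[2]) : (2 : ℤ_[2]) ∣ t * (t - 1) := by
  have hker : PadicInt.toZMod (t * (t - 1)) = 0 := by
    have hZMod2 : ∀ y : ZMod 2, y * (y - 1) = 0 := by decide
    simpa using hZMod2 (PadicInt.toZMod t)
  have hmem := RingHom.mem_ker.2 hker
  rw [PadicInt.ker_toZMod, PadicInt.maximalIdeal_eq_span_p, Ideal.mem_span_singleton] at hmem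
  exact_mod_cast hmem

theorem stmt9_general (k : ℤ) :
    ∃ f : Heis ℤ_[2] ≃* Heis ℤ_[2],
      ∀ s t u h : ℤ_[2], 2 * h = t * (t - 1) →
        f (Heis.mk s t u) = Heis.mk (-s + (k : ℤ_[2]) * t) (-t) (u + (k : ℤ_[2]) * h) := by
  choose q hq using PadicInt.two_dvd_mul_sub_one
  have h2 : IsLeftRegular (2 : ℤ_[2]) := (IsRegular.of_ne_zero two_ne_zero).left
  refine ⟨Heis.twistEquiv (k : ℤ_[2]) q
    (add_of_two_mul_eq_mul_sub_one h2 fun t => (hq t).symm), fun s t u h hh => ?_⟩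
  have hqt : q t = h := h2 ((hq t).symm.trans hh.symm)
  rw [← hqt]
  rfl

/-- For odd `k`, the map
`(s,t,u) ↦ (-s + k t, -t, u + k·t(t-1)/2)` is a well-defined automorphism of `N ⊗ ℤ₂`
(here `h = t(t-1)/2` is the unique 2-adic integer with `2h = t(t-1)`). -/
theorem stmt9 (k : ℤ) (hk : Odd k) :
    ∃ f : Heis ℤ_[2] ≃* Heis ℤ_[2],
      ∀ s t u h : ℤ_[2], 2 * h = t * (t - 1) →
        f (Heis.mk s t u) = Heis.mk (-s + (k : ℤ_[2]) * t) (-t) (u + (k : ℤ_[2]) * h) :=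
  stmt9_general k
end

section
/- Let E be the group with presentation ⟨a, x, y | x^a = x⁻¹, y^a = x^k y⁻¹, [x,y,y] = [x,y,x] = 1⟩ where k is an integer. Then for every n ≥ 0, the element [x, a, …, a, y] (with n copies of a, left-normed) equals [x,y]^{(-2)^n} in E. -/
/-!
Since `x^a = x⁻¹`, commutation with `a` sends `x^m` to `[x^m, a] = x^(-2m)`, so
`[x, a, …, a] = x^((-2)^n)`. Since `[x, y]` commutes with `x`, conjugation by `y` sends `x^m`
to `(x [x, y])^m = x^m [x, y]^m`, so `[x^m, y] = [x, y]^m`.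
-/

/-- The commutator `[a,b] = a⁻¹ b⁻¹ a b` (as in the paper). -/
def cmt {G : Type*} [Group G] (a b : G) : G := a⁻¹ * b⁻¹ * a * b

namespace Stmt13

/-- Generators: `0 ↦ a`, `1 ↦ x`, `2 ↦ y`. -/
def a' : FreeGroup (Fin 3) := FreeGroup.of 0
def x' : FreeGroup (Fin 3) := FreeGroup.of 1
def y' : FreeGroup (Fin 3) := FreeGroup.of 2

/-- The relators of `E = ⟨a, x, y ∣ x^a = x⁻¹, y^a = x^k y⁻¹, [x,y,y] = [x,y,x] = 1⟩`;
here `g^a = a⁻¹ g a`, and the relators are `(x^a)·x`, `(y^a)·(x^k y⁻¹)⁻¹`,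
`[x,y,y]` and `[x,y,x]`. -/
def rels (k : ℤ) : Set (FreeGroup (Fin 3)) :=
  {(a'⁻¹ * x' * a') * x',
   (a'⁻¹ * y' * a') * (x' ^ k * y'⁻¹)⁻¹,
   cmt (cmt x' y') y',
   cmt (cmt x' y') x'}

/-- The group `E_k` given by the above presentation. -/
def E (k : ℤ) : Type := PresentedGroup (rels k)

instance (k : ℤ) : Group (E k) := by unfold E; infer_instance

def A (k : ℤ) : E k := PresentedGroup.of 0
def X (k : ℤ) : E k := PresentedGroup.of 1
def Y (k : ℤ) : E k := PresentedGroup.of 2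

/-- The left-normed iterated commutator `[x, a, …, a]` with `n` copies of `a`. -/
def inner (k : ℤ) : ℕ → E k
  | 0 => X k
  | n + 1 => cmt (inner k n) (A k)

end Stmt13

theorem cmt_eq_one_iff_commute {G : Type*} [Group G] {a b : G} :
    cmt a b = 1 ↔ Commute a b := by
  rw [show cmt a b = (b * a)⁻¹ * (a * b) by simp only [cmt, mul_inv_rev, mul_assoc],
    inv_mul_eq_one, Commute, SemiconjBy, eq_comm]

theorem inv_mul_zpow_mul {G : Type*} [Group G] (g x : G) (m : ℤ) :
    g⁻¹ * x ^ m * g = (g⁻¹ * x * g) ^ m := by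
  simpa using (conj_zpow (a := g⁻¹) (b := x) (i := m)).symm

theorem cmt_zpow_left_of_conj_eq_inv {G : Type*} [Group G] {x a : G}
    (h : a⁻¹ * x * a = x⁻¹) (m : ℤ) : cmt (x ^ m) a = x ^ (-2 * m) := by
  calc cmt (x ^ m) a = (x ^ m)⁻¹ * (a⁻¹ * x ^ m * a) := by simp only [cmt, mul_assoc]
    _ = x ^ (-2 * m) := by
      rw [inv_mul_zpow_mul, h, ← zpow_neg, inv_zpow', ← zpow_add]
      ring_nf

theorem cmt_zpow_left_of_commute {G : Type*} [Group G] {x y : G}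
    (h : Commute (cmt x y) x) (m : ℤ) : cmt (x ^ m) y = cmt x y ^ m := by
  have hconj : y⁻¹ * x * y = x * cmt x y := by simp [cmt, mul_assoc]
  calc cmt (x ^ m) y = (x ^ m)⁻¹ * (y⁻¹ * x ^ m * y) := by simp only [cmt, mul_assoc]
    _ = cmt x y ^ m := by
      rw [inv_mul_zpow_mul, hconj, h.symm.mul_zpow, inv_mul_cancel_left]

namespace Stmt13

theorem A_inv_mul_X_mul_A (k : ℤ) : (A k)⁻¹ * X k * A k = (X k)⁻¹ :=
  mul_eq_one_iff_eq_inv.1 (PresentedGroup.one_of_mem (Set.mem_insert _ _))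

theorem commute_cmt_X_Y_X (k : ℤ) : Commute (cmt (X k) (Y k)) (X k) :=
  cmt_eq_one_iff_commute.1 <|
    PresentedGroup.one_of_mem (x := cmt (cmt x' y') x') (by simp [rels])

theorem inner_eq_X_zpow (k : ℤ) (n : ℕ) : inner k n = X k ^ ((-2 : ℤ) ^ n) := by
  induction n with
  | zero => simp [inner]
  | succ n ih =>
    rw [inner, ih, cmt_zpow_left_of_conj_eq_inv (A_inv_mul_X_mul_A k), pow_succ, mul_comm]

end Stmt13

open Stmt13 in
/-- In `E = ⟨a, x, y ∣ x^a = x⁻¹, y^a = x^k y⁻¹, [x,y,y] = [x,y,x] = 1⟩`,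
for every `n ≥ 0` the left-normed commutator `[x, a, …, a, y]` (with `n` copies of `a`)
equals `[x,y]^{(-2)^n}`. -/
theorem stmt13 (k : ℤ) (n : ℕ) :
    cmt (inner k n) (Y k) = (cmt (X k) (Y k)) ^ ((-2 : ℤ) ^ n) := by
  rw [inner_eq_X_zpow]
  exact cmt_zpow_left_of_commute (commute_cmt_X_Y_X k) _
end

section
/- Let k be an odd integer and G_k = ℤ ⋉_{a_k} ℤ² with a_k the matrix with rows (-1,k),(0,-1). Then the filtration γ_{n+1}(G_k) = 0 ⋉ b_k^n(ℤ²) of 0 ⋉ ℤ² is equivalent to the filtration 0 ⋉ 2ⁿℤ², and consequently the pronilpotent completion lim_n G_k/γ_{n+1}G_k is isomorphic to ℤ ⋉_{a_k} ℤ_2², where ℤ_2 is the 2-adic integers. -/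
/-- The transition map `G/γ_{n+2} → G/γ_{n+1}` between nilpotent quotients. -/
def nilTransition (G : Type*) [Group G] (n : ℕ) :
    (G ⧸ (⊤ : Subgroup G).lowerCentralSeries (n + 1)) →* (G ⧸ (⊤ : Subgroup G).lowerCentralSeries n) :=
  QuotientGroup.map _ _ (MonoidHom.id G)
    (by simpa using (⊤ : Subgroup G).lowerCentralSeries_antitone (Nat.le_succ n))

/-- The pronilpotent completion `Ĝ = lim_n G/γ_{n+1} G`, realized as the subgroup of
compatible families in `Π n, G/γ_{n+1} G`. -/
def pronilCompletion (G : Type*) [Group G] :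
    Subgroup (∀ n : ℕ, G ⧸ (⊤ : Subgroup G).lowerCentralSeries n) where
  carrier := {f | ∀ n : ℕ, nilTransition G n (f (n + 1)) = f n}
  one_mem' := by intro n; exact map_one _
  mul_mem' := by
    intro a b ha hb n
    show nilTransition G n ((a * b) (n + 1)) = (a * b) n
    rw [Pi.mul_apply, Pi.mul_apply, map_mul, ha n, hb n]
  inv_mem' := by
    intro a ha n
    show nilTransition G n (a⁻¹ (n + 1)) = a⁻¹ n
    rw [Pi.inv_apply, Pi.inv_apply, map_inv, ha n]

/-- The subgroup `0 ⋉ 2^n ℤ²` of `ℤ ⋉_{a_k} ℤ²`. -/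
def twoPowSub (k : ℤ) (n : ℕ) : Subgroup (ZSd (akUnit ℤ k)) :=
  Subgroup.map SemidirectProduct.inl
    (AddSubgroup.toSubgroup
      (AddSubgroup.pi Set.univ fun _ : Fin 2 => AddSubgroup.zmultiples ((2 : ℤ) ^ n)))

namespace Stmt15

open Matrix Multiplicative SemidirectProduct
open scoped commutatorElement

/-- `b_k = a_k - 1`. -/
abbrev bMat (k : ℤ) : Matrix (Fin 2) (Fin 2) ℤ := !![-2, k; 0, -2]

/-- The "adjugate" companion with `bMat * bMat' = 4`. -/
abbrev bMat' (k : ℤ) : Matrix (Fin 2) (Fin 2) ℤ := !![-2, -k; 0, -2]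

/-- `a_k^s` as a matrix. -/
abbrev mA (R : Type*) [CommRing R] (k s : ℤ) : Matrix (Fin 2) (Fin 2) R :=
  ((akUnit R k ^ s : (Matrix (Fin 2) (Fin 2) R)ˣ) : Matrix (Fin 2) (Fin 2) R)

lemma akUnit_val (k : ℤ) :
    ((akUnit ℤ k : (Matrix (Fin 2) (Fin 2) ℤ)ˣ) : Matrix (Fin 2) (Fin 2) ℤ) = 1 + bMat k := by
  show !![(-1 : ℤ), (k : ℤ); 0, -1] = _
  rw [Matrix.one_fin_two]
  norm_num

lemma akUnit_inv_val (k : ℤ) :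
    ((akUnit ℤ k)⁻¹ : (Matrix (Fin 2) (Fin 2) ℤ)ˣ).val = 1 + bMat k * !![1, k; 0, 1] := by
  show !![(-1 : ℤ), -(k : ℤ); 0, -1] = _
  rw [Matrix.mul_fin_two, Matrix.one_fin_two]
  norm_num
  ring_nf

lemma commute_bMat_ak (k : ℤ) :
    Commute (bMat k) ((akUnit ℤ k : (Matrix (Fin 2) (Fin 2) ℤ)ˣ) : Matrix (Fin 2) (Fin 2) ℤ) := by
  rw [akUnit_val]
  exact (Commute.one_right _).add_right (Commute.refl _)

lemma commute_units_zpow {M : Type*} [Monoid M] {a : M} {u : Mˣ} (h : Commute a ↑u) (s : ℤ) :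
    Commute a ((u ^ s : Mˣ) : M) := by
  induction s using Int.induction_on with
  | zero => simpa using Commute.one_right a
  | succ i ih =>
    rw [_root_.zpow_add_one, Units.val_mul]
    exact ih.mul_right h
  | pred i ih =>
    rw [_root_.zpow_sub_one, Units.val_mul]
    exact ih.mul_right h.units_inv_right

lemma commute_bMat_mA (k s : ℤ) : Commute (bMat k) (mA ℤ k s) :=
  commute_units_zpow (commute_bMat_ak k) s

lemma commute_bMat_pow_mA (k s : ℤ) (n : ℕ) : Commute (bMat k ^ n) (mA ℤ k s) :=
  (commute_bMat_mA k s).pow_left n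

/-- `a_k^s - 1` is divisible by `b_k` on the left. -/
lemma exC (k : ℤ) : ∀ s : ℤ, ∃ C : Matrix (Fin 2) (Fin 2) ℤ, mA ℤ k s - 1 = bMat k * C := by
  intro s
  induction s using Int.induction_on with
  | zero => exact ⟨0, by simp [mA]⟩
  | succ i ih =>
    obtain ⟨C, hC⟩ := ih
    have hval : mA ℤ k i = 1 + bMat k * C := sub_eq_iff_eq_add'.mp hC
    refine ⟨1 + C + C * bMat k, ?_⟩
    rw [mA, _root_.zpow_add_one, Units.val_mul]
    rw [show ((akUnit ℤ k ^ (i:ℤ) : (Matrix (Fin 2) (Fin 2) ℤ)ˣ) : Matrix (Fin 2) (Fin 2) ℤ) = mA ℤ k i from rfl]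
    rw [hval, akUnit_val]
    noncomm_ring
  | pred i ih =>
    obtain ⟨C, hC⟩ := ih
    have hval : mA ℤ k (-i) = 1 + bMat k * C := sub_eq_iff_eq_add'.mp hC
    refine ⟨!![1, k; 0, 1] + C + C * (bMat k * !![1, k; 0, 1]), ?_⟩
    rw [mA, _root_.zpow_sub_one, Units.val_mul]
    rw [show ((akUnit ℤ k ^ (-(i:ℤ)) : (Matrix (Fin 2) (Fin 2) ℤ)ˣ) : Matrix (Fin 2) (Fin 2) ℤ) = mA ℤ k (-i) from rfl]
    rw [hval, akUnit_inv_val]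
    noncomm_ring

lemma bMat_mul_bMat' (k : ℤ) : bMat k * bMat' k = (4 : ℤ) • 1 := by
  rw [Matrix.mul_fin_two, Matrix.one_fin_two]
  norm_num [Matrix.smul_cons]
  ring_nf

lemma bMat_pow_mul_bMat'_pow (k : ℤ) (n : ℕ) :
    bMat k ^ n * bMat' k ^ n = ((4 : ℤ) ^ n) • 1 := by
  induction n with
  | zero => simp
  | succ n ih =>
    rw [pow_succ, pow_succ']
    calc bMat k ^ n * bMat k * (bMat' k * bMat' k ^ n)
        = bMat k ^ n * (bMat k * bMat' k) * bMat' k ^ n := by noncomm_ring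
      _ = bMat k ^ n * ((4:ℤ) • 1) * bMat' k ^ n := by rw [bMat_mul_bMat' k]
      _ = (4:ℤ) • (bMat k ^ n * bMat' k ^ n) := by
          rw [Matrix.mul_smul, Matrix.smul_mul, mul_one]
      _ = ((4:ℤ) ^ (n+1)) • 1 := by rw [ih, smul_smul, pow_succ]; ring_nf

/-- `b_k^(n+1) = 2^n • F` with `F` having even diagonal. -/
lemma bMat_pow_structure (k : ℤ) (n : ℕ) :
    ∃ a x c : ℤ, bMat k ^ (n + 1) = ((2:ℤ) ^ n) • !![2*a, x; 0, 2*c] := by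
  induction n with
  | zero =>
    refine ⟨-1, k, -1, ?_⟩
    rw [pow_one, pow_zero, one_smul]
    norm_num
  | succ n ih =>
    obtain ⟨a, x, c, h⟩ := ih
    refine ⟨-a, a*k - x, -c, ?_⟩
    rw [pow_succ, h, Matrix.smul_mul]
    rw [show !![2*a, x; 0, 2*c] * bMat k = (2:ℤ) • !![2*(-a), a*k - x; 0, 2*(-c)] by
      rw [Matrix.mul_fin_two]; norm_num [Matrix.smul_cons]; ring_nf; simp]
    rw [smul_smul, pow_succ]

/-- components of `b_k^(n+1) v` are divisible by `2^n`. -/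
lemma dvd_of_mem_bpow (k : ℤ) (n : ℕ) (u : Fin 2 → ℤ) (i : Fin 2) :
    (2:ℤ) ^ n ∣ (bMat k ^ (n+1) *ᵥ u) i := by
  obtain ⟨a, x, c, h⟩ := bMat_pow_structure k n
  rw [h, Matrix.smul_mulVec]
  exact ⟨(!![2*a, x; 0, 2*c] *ᵥ u) i, rfl⟩

/-- a vector with components divisible by `2^(2n)` is in the image of `b_k^n`. -/
lemma mem_bpow_of_dvd (k : ℤ) (n : ℕ) (w : Fin 2 → ℤ) (h : ∀ i, (2:ℤ) ^ (2*n) ∣ w i) :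
    ∃ u, w = bMat k ^ n *ᵥ u := by
  choose c hc using h
  refine ⟨bMat' k ^ n *ᵥ c, ?_⟩
  rw [Matrix.mulVec_mulVec, bMat_pow_mul_bMat'_pow, Matrix.smul_mulVec, Matrix.one_mulVec]
  funext i
  rw [hc i]
  simp [pow_mul]

section action

variable {s : ℕ} {R : Type*} [CommRing R]

lemma zMatAction_apply (A : (Matrix (Fin s) (Fin s) R)ˣ) (r : Multiplicative ℤ) (w : Fin s → R) :
    zMatAction A r (ofAdd w) =
      ofAdd (((A ^ r.toAdd : (Matrix (Fin s) (Fin s) R)ˣ) : Matrix (Fin s) (Fin s) R) *ᵥ w) := by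
  rw [zMatAction, zpowersHom_apply]
  induction r.toAdd using Int.induction_on generalizing w with
  | zero => simp
  | succ i ih =>
    rw [_root_.zpow_add_one]
    have h1 : ∀ v : Fin s → R,
        (AddEquiv.toMultiplicative (Matrix.unitsAddAut A)) (ofAdd v) = ofAdd (↑A *ᵥ v) :=
      fun _ => rfl
    rw [MulAut.mul_apply, h1, ih, Matrix.mulVec_mulVec, ← Units.val_mul, ← _root_.zpow_add_one]
  | pred i ih =>
    rw [_root_.zpow_sub_one]
    have h1 : ∀ v : Fin s → R,
        (AddEquiv.toMultiplicative (Matrix.unitsAddAut A))⁻¹ (ofAdd v) = ofAdd (↑A⁻¹ *ᵥ v) :=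
      fun _ => rfl
    rw [MulAut.mul_apply, h1, ih, Matrix.mulVec_mulVec, ← Units.val_mul, ← _root_.zpow_sub_one]

end action

lemma mA_zero_mulVec' {R : Type*} [CommRing R] (k : ℤ) (z : Fin 2 → R) : mA R k 0 *ᵥ z = z := by
  rw [show mA R k 0 = 1 by rw [mA, zpow_zero, Units.val_one], Matrix.one_mulVec]

lemma mA_mulVec_mulVec' {R : Type*} [CommRing R] (k a b : ℤ) (z : Fin 2 → R) :
    mA R k a *ᵥ (mA R k b *ᵥ z) = mA R k (a + b) *ᵥ z := by
  rw [Matrix.mulVec_mulVec, ← Units.val_mul, ← _root_.zpow_add]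



open Matrix Multiplicative SemidirectProduct

variable (k : ℤ)

/-- The subgroup `0 ⋉ b_k^n(ℤ²)`. -/
def bSub (n : ℕ) : Subgroup (ZSd (akUnit ℤ k)) where
  carrier := {g | g.right = 1 ∧ ∃ u, g.left.toAdd = bMat k ^ n *ᵥ u}
  one_mem' := ⟨rfl, 0, by simp⟩
  mul_mem' := by
    rintro a b ⟨ha1, u, hu⟩ ⟨hb1, v, hv⟩
    refine ⟨?_, u + v, ?_⟩
    · rw [mul_right, ha1, hb1, mul_one]
    · rw [mul_left, ha1, _root_.map_one, MulAut.one_apply, toAdd_mul, hu, hv, Matrix.mulVec_add]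
  inv_mem' := by
    rintro a ⟨ha1, u, hu⟩
    refine ⟨?_, -u, ?_⟩
    · rw [inv_right, ha1, inv_one]
    · rw [inv_left, ha1, inv_one, _root_.map_one, MulAut.one_apply, toAdd_inv, hu, Matrix.mulVec_neg]

lemma mem_bSub {n : ℕ} {g : ZSd (akUnit ℤ k)} :
    g ∈ bSub k n ↔ g.right = 1 ∧ ∃ u, g.left.toAdd = bMat k ^ n *ᵥ u := Iff.rfl

lemma act_eq (a : Multiplicative ℤ) (z : Fin 2 → ℤ) :
    zMatAction (akUnit ℤ k) a (ofAdd z) = ofAdd (mA ℤ k a.toAdd *ᵥ z) :=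
  zMatAction_apply _ a z

lemma comm_mk (v w : Fin 2 → ℤ) (s t : ℤ) :
    ⁅(⟨ofAdd v, ofAdd s⟩ : ZSd (akUnit ℤ k)), (⟨ofAdd w, ofAdd t⟩ : ZSd (akUnit ℤ k))⁆ =
      (⟨ofAdd (v + mA ℤ k s *ᵥ w - mA ℤ k t *ᵥ v - w), 1⟩ : ZSd (akUnit ℤ k)) := by
  rw [commutatorElement_def]
  ext
  · simp only [mul_left, mul_right, inv_left, inv_right]
    rw [show ((ofAdd v : Multiplicative (Fin 2 → ℤ)))⁻¹ = ofAdd (-v) by simp,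
        show ((ofAdd w : Multiplicative (Fin 2 → ℤ)))⁻¹ = ofAdd (-w) by simp]
    simp only [act_eq, ← ofAdd_add, toAdd_mul, toAdd_inv, toAdd_ofAdd, act_eq]
    congr 1
    have e1 : ∀ (a b : ℤ) (z : Fin 2 → ℤ), (mA ℤ k a) *ᵥ ((mA ℤ k b) *ᵥ z) = mA ℤ k (a + b) *ᵥ z := by
      intro a b z; rw [Matrix.mulVec_mulVec, ← Units.val_mul, ← _root_.zpow_add]
    have e0 : ∀ z : Fin 2 → ℤ, mA ℤ k 0 *ᵥ z = z := by
      intro z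
      rw [show mA ℤ k 0 = 1 by rw [mA, zpow_zero, Units.val_one], Matrix.one_mulVec]
    simp only [e1]
    rw [show s + t + -s = t by ring]
    rw [show t + -t = (0:ℤ) by ring]
    rw [e0]
    simp only [Matrix.mulVec_neg]
    abel
  · simp only [mul_right, inv_right, toAdd_mul, toAdd_inv]
    rw [show (1 : Multiplicative ℤ) = ofAdd 0 from rfl]
    simp only [toAdd_mul, toAdd_inv, toAdd_ofAdd]
    ring

lemma mA_one (k : ℤ) : mA ℤ k 1 = 1 + bMat k := by rw [mA, zpow_one]; exact akUnit_val k

lemma lcs_le_bSub : ∀ n : ℕ, (⊤ : Subgroup (ZSd (akUnit ℤ k))).lowerCentralSeries (n+1) ≤ bSub k (n+1) := by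
  intro n
  induction n with
  | zero =>
    have hdef : (⊤ : Subgroup (ZSd (akUnit ℤ k))).lowerCentralSeries 1
        = ⁅(⊤ : Subgroup (ZSd (akUnit ℤ k))).lowerCentralSeries 0, ⊤⁆ := rfl
    rw [hdef, Subgroup.lowerCentralSeries_zero, Subgroup.commutator_le]
    intro g _ h _
    obtain ⟨gl, gr⟩ := g
    obtain ⟨hl, hr⟩ := h
    have hc := comm_mk k gl.toAdd hl.toAdd gr.toAdd hr.toAdd
    rw [ofAdd_toAdd, ofAdd_toAdd, ofAdd_toAdd, ofAdd_toAdd] at hc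
    rw [hc]
    obtain ⟨Cs, hCs⟩ := exC k gr.toAdd
    obtain ⟨Ct, hCt⟩ := exC k hr.toAdd
    refine ⟨rfl, Cs *ᵥ hl.toAdd - Ct *ᵥ gl.toAdd, ?_⟩
    have h1 : mA ℤ k gr.toAdd *ᵥ hl.toAdd - hl.toAdd = bMat k *ᵥ (Cs *ᵥ hl.toAdd) := by
      rw [Matrix.mulVec_mulVec, ← hCs, Matrix.sub_mulVec, Matrix.one_mulVec]
    have h2 : mA ℤ k hr.toAdd *ᵥ gl.toAdd - gl.toAdd = bMat k *ᵥ (Ct *ᵥ gl.toAdd) := by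
      rw [Matrix.mulVec_mulVec, ← hCt, Matrix.sub_mulVec, Matrix.one_mulVec]
    show gl.toAdd + mA ℤ k gr.toAdd *ᵥ hl.toAdd - mA ℤ k hr.toAdd *ᵥ gl.toAdd - hl.toAdd
        = bMat k ^ 1 *ᵥ (Cs *ᵥ hl.toAdd - Ct *ᵥ gl.toAdd)
    rw [pow_one, Matrix.mulVec_sub, ← h1, ← h2]
    abel
  | succ n ih =>
    have hdef : (⊤ : Subgroup (ZSd (akUnit ℤ k))).lowerCentralSeries (n+1+1)
        = ⁅(⊤ : Subgroup (ZSd (akUnit ℤ k))).lowerCentralSeries (n+1), ⊤⁆ := rfl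
    rw [hdef, Subgroup.commutator_le]
    intro g hg h _
    obtain ⟨hg1, u, hu⟩ := ih hg
    obtain ⟨gl, gr⟩ := g
    obtain ⟨hl, hr⟩ := h
    have hgr : gr = ofAdd (0:ℤ) := hg1
    subst hgr
    have hc := comm_mk k gl.toAdd hl.toAdd 0 hr.toAdd
    rw [ofAdd_toAdd, ofAdd_toAdd, ofAdd_toAdd] at hc
    rw [hc]
    obtain ⟨Ct, hCt⟩ := exC k hr.toAdd
    refine ⟨rfl, -(Ct *ᵥ u), ?_⟩
    have hAt : mA ℤ k hr.toAdd = 1 + bMat k * Ct := sub_eq_iff_eq_add'.mp hCt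
    have key : mA ℤ k hr.toAdd *ᵥ (bMat k ^ (n+1) *ᵥ u)
        = bMat k ^ (n+1) *ᵥ u + (bMat k ^ (n+2) * Ct) *ᵥ u := by
      rw [Matrix.mulVec_mulVec, ← (commute_bMat_pow_mA k hr.toAdd (n+1)).eq, hAt, mul_add,
        mul_one, ← mul_assoc, ← pow_succ, Matrix.add_mulVec]
    show (gl.toAdd : Fin 2 → ℤ) + mA ℤ k 0 *ᵥ hl.toAdd - mA ℤ k hr.toAdd *ᵥ gl.toAdd - hl.toAdd
        = bMat k ^ (n+1+1) *ᵥ (-(Ct *ᵥ u))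
    rw [mA_zero_mulVec', hu, key, Matrix.mulVec_neg, Matrix.mulVec_mulVec]
    abel

lemma bSub_le_lcs : ∀ n : ℕ, bSub k n ≤ (⊤ : Subgroup (ZSd (akUnit ℤ k))).lowerCentralSeries n := by
  intro n
  induction n with
  | zero => intro g _; rw [Subgroup.lowerCentralSeries_zero]; trivial
  | succ n ih =>
    rintro g ⟨hg1, u, hu⟩
    have hx : (⟨ofAdd (bMat k ^ n *ᵥ u), ofAdd (0:ℤ)⟩ : ZSd (akUnit ℤ k)) ∈ bSub k n :=
      ⟨rfl, u, by simp⟩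
    have hcomm := comm_mk k 0 (bMat k ^ n *ᵥ u) 1 0
    have hval : (0:Fin 2 → ℤ) + mA ℤ k 1 *ᵥ (bMat k ^ n *ᵥ u) - mA ℤ k 0 *ᵥ (0:Fin 2 → ℤ)
        - bMat k ^ n *ᵥ u = bMat k ^ (n+1) *ᵥ u := by
      rw [mA_zero_mulVec', mA_one, Matrix.add_mulVec, Matrix.one_mulVec, Matrix.mulVec_mulVec,
        ← pow_succ']
      abel
    have hg : g = ⁅(⟨ofAdd (0:Fin 2 → ℤ), ofAdd (1:ℤ)⟩ : ZSd (akUnit ℤ k)),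
        (⟨ofAdd (bMat k ^ n *ᵥ u), ofAdd (0:ℤ)⟩ : ZSd (akUnit ℤ k))⁆ := by
      rw [hcomm]
      ext : 1
      · show g.left = ofAdd _
        rw [hval, ← hu, ofAdd_toAdd]
      · exact hg1
    have hdef : (⊤ : Subgroup (ZSd (akUnit ℤ k))).lowerCentralSeries (n+1)
        = ⁅(⊤ : Subgroup (ZSd (akUnit ℤ k))).lowerCentralSeries n, ⊤⁆ := rfl
    rw [hdef, Subgroup.commutator_comm, hg]
    exact Subgroup.commutator_mem_commutator (Subgroup.mem_top _) (ih hx)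

lemma mem_twoPowSub {n : ℕ} {g : ZSd (akUnit ℤ k)} :
    g ∈ twoPowSub k n ↔ g.right = 1 ∧ ∀ i, (2:ℤ)^n ∣ g.left.toAdd i := by
  constructor
  · rintro ⟨x, hx, rfl⟩
    refine ⟨rfl, fun i => ?_⟩
    have h2 : x.toAdd ∈ AddSubgroup.pi Set.univ
        (fun _ : Fin 2 => AddSubgroup.zmultiples ((2:ℤ)^n)) := hx
    exact Int.mem_zmultiples_iff.mp (h2 i (Set.mem_univ i))
  · rintro ⟨h1, h2⟩
    refine ⟨g.left, ?_, ?_⟩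
    · show g.left.toAdd ∈ AddSubgroup.pi Set.univ _
      intro i _
      exact Int.mem_zmultiples_iff.mpr (h2 i)
    · ext
      · rfl
      · show (1:Multiplicative ℤ).toAdd = g.right.toAdd
        rw [h1]
  
lemma twoPow_le_bSub (n : ℕ) : twoPowSub k (2*n) ≤ bSub k n := by
  intro g hg
  obtain ⟨h1, h2⟩ := (mem_twoPowSub k).mp hg
  exact ⟨h1, mem_bpow_of_dvd k n _ h2⟩

lemma bSub_le_twoPow (n : ℕ) : bSub k (n+1) ≤ twoPowSub k n := by
  rintro g ⟨h1, u, hu⟩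
  refine (mem_twoPowSub k).mpr ⟨h1, fun i => ?_⟩
  rw [hu]
  exact dvd_of_mem_bpow k n u i

lemma part1 (n : ℕ) : twoPowSub k (2*n) ≤ (⊤ : Subgroup (ZSd (akUnit ℤ k))).lowerCentralSeries n :=
  (twoPow_le_bSub k n).trans (bSub_le_lcs k n)

lemma part2 (n : ℕ) : (⊤ : Subgroup (ZSd (akUnit ℤ k))).lowerCentralSeries (n+1) ≤ twoPowSub k n :=
  (lcs_le_bSub k n).trans (bSub_le_twoPow k n)


/-! ### 2-adic layer -/

/-- Integer approximation of a 2-adic integer mod `2^m`. -/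
noncomputable def apprZ (m : ℕ) (x : ℤ_[2]) : ℤ := (PadicInt.toZModPow m x).val

lemma two_eq_cast : ((2:ℕ) : ℤ_[2]) = 2 := by norm_num

lemma padic_int_dvd_iff (m : ℕ) (c : ℤ) :
    (2:ℤ_[2])^m ∣ (c : ℤ_[2]) ↔ (2:ℤ)^m ∣ c := by
  constructor
  · intro h
    have h1 : (c : ℤ_[2]) ∈ Ideal.span {(2:ℤ_[2])^m} := Ideal.mem_span_singleton.mpr h
    rw [← two_eq_cast, ← PadicInt.ker_toZModPow, RingHom.mem_ker, map_intCast] at h1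
    have := (ZMod.intCast_zmod_eq_zero_iff_dvd c (2^m)).mp h1
    simpa using this
  · rintro ⟨y, hy⟩
    exact ⟨(y : ℤ_[2]), by rw [hy]; push_cast; ring⟩

lemma apprZ_spec (m : ℕ) (x : ℤ_[2]) : (2:ℤ_[2])^m ∣ (x - (apprZ m x : ℤ_[2])) := by
  haveI : NeZero ((2:ℕ)^m) := ⟨by positivity⟩
  have h1 : PadicInt.toZModPow m ((apprZ m x : ℤ) : ℤ_[2]) = PadicInt.toZModPow m x := by
    rw [map_intCast, apprZ]
    push_cast
    exact ZMod.natCast_rightInverse _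
  have h2 : PadicInt.toZModPow m (x - (apprZ m x : ℤ_[2])) = 0 := by
    rw [map_sub, h1, sub_self]
  have h3 : x - (apprZ m x : ℤ_[2]) ∈ Ideal.span {((2:ℕ):ℤ_[2])^m} := by
    rw [← PadicInt.ker_toZModPow, RingHom.mem_ker]
    exact h2
  rw [two_eq_cast] at h3
  exact Ideal.mem_span_singleton.mp h3

lemma padic_zero_of_forall_dvd (x : ℤ_[2]) (h : ∀ m : ℕ, (2:ℤ_[2])^m ∣ x) : x = 0 := by
  have hnorm : ∀ m : ℕ, ‖x‖ ≤ ((2:ℕ):ℝ) ^ (-(m:ℤ)) := by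
    intro m
    rw [PadicInt.norm_le_pow_iff_mem_span_pow]
    rw [two_eq_cast]
    exact Ideal.mem_span_singleton.mpr (h m)
  have h0 : ‖x‖ ≤ 0 := by
    by_contra hc
    push_neg at hc
    obtain ⟨m, hm⟩ := exists_pow_lt_of_lt_one hc (show (1/2 : ℝ) < 1 by norm_num)
    have := hnorm m
    rw [show ((2:ℕ):ℝ)^(-(m:ℤ)) = (1/2:ℝ)^m by
      rw [_root_.zpow_neg, zpow_natCast]; push_cast; rw [one_div, inv_pow]] at this
    linarith
  exact norm_eq_zero.mp (le_antisymm h0 (norm_nonneg x))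

/-- Componentwise cast of integer vectors into `ℤ_[2]`. -/
noncomputable def castv (x : Fin 2 → ℤ) : Fin 2 → ℤ_[2] := fun i => (x i : ℤ_[2])

lemma castv_mulVec (M : Matrix (Fin 2) (Fin 2) ℤ) (x : Fin 2 → ℤ) :
    castv (M *ᵥ x) = (M.map (Int.cast : ℤ → ℤ_[2])) *ᵥ castv x := by
  funext i
  simp only [castv, Matrix.mulVec, dotProduct, Fin.sum_univ_two, Matrix.map_apply]
  push_cast
  ring

lemma mA_map (k s : ℤ) : (mA ℤ k s).map (Int.cast : ℤ → ℤ_[2]) = mA ℤ_[2] k s := by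
  have hψ : Units.map (RingHom.mapMatrix (Int.castRingHom ℤ_[2])).toMonoidHom (akUnit ℤ k)
      = akUnit ℤ_[2] k := by
    apply Units.ext
    show (RingHom.mapMatrix (Int.castRingHom ℤ_[2])) _ = _
    rw [RingHom.mapMatrix_apply]
    show Matrix.map !![-1, (k:ℤ); 0, -1] _ = !![-1, (k:ℤ_[2]); 0, -1]
    ext i j
    fin_cases i <;> fin_cases j <;> simp [Matrix.map_apply]
  calc (mA ℤ k s).map (Int.cast : ℤ → ℤ_[2])
      = ((Units.map (RingHom.mapMatrix (Int.castRingHom ℤ_[2])).toMonoidHom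
          ((akUnit ℤ k) ^ s)) : (Matrix (Fin 2) (Fin 2) ℤ_[2])ˣ) := rfl
    _ = mA ℤ_[2] k s := by rw [map_zpow, hψ]

/-- `x : ℤ²` approximates `v : ℤ_[2]²` mod `2^m`. -/
def Dv (m : ℕ) (x : Fin 2 → ℤ) (v : Fin 2 → ℤ_[2]) : Prop :=
  ∀ i, (2:ℤ_[2])^m ∣ (v i - (x i : ℤ_[2]))

lemma Dv.mono {m m' : ℕ} (h : m' ≤ m) {x v} (hd : Dv m x v) : Dv m' x v :=
  fun i => (pow_dvd_pow _ h).trans (hd i)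

lemma Dv.add {m : ℕ} {x y : Fin 2 → ℤ} {v w : Fin 2 → ℤ_[2]}
    (hx : Dv m x v) (hy : Dv m y w) : Dv m (x + y) (v + w) := by
  intro i
  have h := dvd_add (hx i) (hy i)
  rwa [show v i - (x i : ℤ_[2]) + (w i - (y i : ℤ_[2])) = (v + w) i - (((x + y) i : ℤ) : ℤ_[2]) by
    push_cast [Pi.add_apply]; ring] at h

lemma Dv.mulVec (k s : ℤ) {m : ℕ} {x : Fin 2 → ℤ} {v : Fin 2 → ℤ_[2]} (h : Dv m x v) :
    Dv m (mA ℤ k s *ᵥ x) (mA ℤ_[2] k s *ᵥ v) := by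
  intro i
  have hcast : ((( mA ℤ k s *ᵥ x) i : ℤ) : ℤ_[2]) = (mA ℤ_[2] k s *ᵥ castv x) i := by
    have h1 := congrFun (castv_mulVec (mA ℤ k s) x) i
    rw [mA_map] at h1
    exact h1
  rw [hcast]
  have hsub : (mA ℤ_[2] k s *ᵥ v) i - (mA ℤ_[2] k s *ᵥ castv x) i
      = (mA ℤ_[2] k s *ᵥ (v - castv x)) i := by
    rw [Matrix.mulVec_sub, Pi.sub_apply]
  rw [hsub]
  have hexp : (mA ℤ_[2] k s *ᵥ (v - castv x)) i
      = mA ℤ_[2] k s i 0 * (v 0 - castv x 0) + mA ℤ_[2] k s i 1 * (v 1 - castv x 1) := by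
    simp [Matrix.mulVec, dotProduct, Fin.sum_univ_two]
  rw [hexp]
  exact dvd_add (Dvd.dvd.mul_left (h 0) _) (Dvd.dvd.mul_left (h 1) _)

lemma Dv.exists_bpow (k : ℤ) (n : ℕ) {x y : Fin 2 → ℤ} {v : Fin 2 → ℤ_[2]}
    (hx : Dv (2*n) x v) (hy : Dv (2*n) y v) : ∃ u, x - y = bMat k ^ n *ᵥ u := by
  apply mem_bpow_of_dvd
  intro i
  rw [← padic_int_dvd_iff (2*n) ((x - y) i)]
  have h2 := dvd_sub (hy i) (hx i)
  rwa [show (v i - ((y i : ℤ) : ℤ_[2])) - (v i - ((x i : ℤ):ℤ_[2]))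
      = (((x - y) i : ℤ) : ℤ_[2]) by push_cast [Pi.sub_apply]; ring] at h2

/-- Integer approximation of a `ℤ_[2]`-vector mod `4^n`. -/
noncomputable def apprv (n : ℕ) (v : Fin 2 → ℤ_[2]) : Fin 2 → ℤ := fun i => apprZ (2*n) (v i)

lemma apprv_spec (n : ℕ) (v : Fin 2 → ℤ_[2]) : Dv (2*n) (apprv n v) v :=
  fun i => apprZ_spec _ _

/-! ### The completion map -/

lemma mul_left_toAdd {R : Type*} [CommRing R] (k : ℤ) (g h : ZSd (akUnit R k)) :
    (g * h).left.toAdd = g.left.toAdd + mA R k g.right.toAdd *ᵥ h.left.toAdd := by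
  rw [mul_left, toAdd_mul, ← ofAdd_toAdd h.left, zMatAction_apply, toAdd_ofAdd, toAdd_ofAdd]

lemma mA_bpow_swap (s : ℤ) (n : ℕ) (u : Fin 2 → ℤ) :
    mA ℤ k s *ᵥ (bMat k ^ n *ᵥ u) = bMat k ^ n *ᵥ (mA ℤ k s *ᵥ u) := by
  rw [Matrix.mulVec_mulVec, Matrix.mulVec_mulVec, (commute_bMat_pow_mA k s n).eq]

lemma inv_mul_left_toAdd (x y : ZSd (akUnit ℤ k)) :
    (x⁻¹ * y).left.toAdd = mA ℤ k (-(x.right.toAdd)) *ᵥ (y.left.toAdd - x.left.toAdd) := by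
  rw [mul_left, inv_left, inv_right, ← _root_.map_mul]
  rw [show x.left⁻¹ * y.left = ofAdd (y.left.toAdd - x.left.toAdd) by
    rw [← ofAdd_toAdd (x.left⁻¹ * y.left)]
    congr 1
    rw [toAdd_mul, toAdd_inv]
    ring]
  rw [zMatAction_apply, toAdd_ofAdd, toAdd_inv]

lemma mk_eq_mk {n : ℕ} {x y : ZSd (akUnit ℤ k)} (hr : x.right = y.right)
    (h : ∃ u, y.left.toAdd - x.left.toAdd = bMat k ^ n *ᵥ u) :
    (x : (ZSd (akUnit ℤ k)) ⧸ (⊤ : Subgroup (ZSd (akUnit ℤ k))).lowerCentralSeries n) = y := by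
  rw [QuotientGroup.eq]
  apply bSub_le_lcs
  obtain ⟨u, hu⟩ := h
  refine ⟨?_, mA ℤ k (-(x.right.toAdd)) *ᵥ u, ?_⟩
  · rw [mul_right, inv_right, hr, inv_mul_cancel]
  · rw [inv_mul_left_toAdd, hu, mA_bpow_swap]

lemma quot_extract {n : ℕ} {x y : ZSd (akUnit ℤ k)} (h : x⁻¹ * y ∈ bSub k n) :
    y.right = x.right ∧ ∃ u, y.left.toAdd - x.left.toAdd = bMat k ^ n *ᵥ u := by
  obtain ⟨h1, u, hu⟩ := h
  rw [mul_right, inv_right] at h1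
  refine ⟨(inv_mul_eq_one.mp h1).symm, mA ℤ k (x.right.toAdd) *ᵥ u, ?_⟩
  rw [inv_mul_left_toAdd] at hu
  have hd : y.left.toAdd - x.left.toAdd
      = mA ℤ k (x.right.toAdd) *ᵥ (mA ℤ k (-(x.right.toAdd)) *ᵥ (y.left.toAdd - x.left.toAdd)) := by
    rw [mA_mulVec_mulVec', show x.right.toAdd + -(x.right.toAdd) = (0:ℤ) by ring, mA_zero_mulVec']
  rw [hd, hu, mA_bpow_swap]

/-- The `n`-th integer approximation of an element of `ℤ ⋉ ℤ_[2]²`. -/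
noncomputable def apprG (n : ℕ) (g : ZSd (akUnit ℤ_[2] k)) : ZSd (akUnit ℤ k) :=
  ⟨ofAdd (apprv n g.left.toAdd), g.right⟩

lemma apprG_right (n : ℕ) (g : ZSd (akUnit ℤ_[2] k)) : (apprG k n g).right = g.right := rfl

lemma apprG_left (n : ℕ) (g : ZSd (akUnit ℤ_[2] k)) :
    (apprG k n g).left.toAdd = apprv n g.left.toAdd := by
  rw [apprG, toAdd_ofAdd]

noncomputable def phiFun (g : ZSd (akUnit ℤ_[2] k)) :
    ∀ n, (ZSd (akUnit ℤ k)) ⧸ (⊤ : Subgroup (ZSd (akUnit ℤ k))).lowerCentralSeries n :=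
  fun n => QuotientGroup.mk (apprG k n g)

lemma phiFun_mul (g h : ZSd (akUnit ℤ_[2] k)) :
    phiFun k (g * h) = phiFun k g * phiFun k h := by
  funext n
  simp only [phiFun, Pi.mul_apply]
  rw [← QuotientGroup.mk_mul]
  apply mk_eq_mk
  · rw [apprG_right, mul_right, mul_right, apprG_right, apprG_right]
  · have hy : (apprG k n g * apprG k n h).left.toAdd
        = apprv n g.left.toAdd + mA ℤ k g.right.toAdd *ᵥ apprv n h.left.toAdd := by
      rw [mul_left_toAdd, apprG_left, apprG_left, apprG_right]
    have hx : (apprG k n (g * h)).left.toAdd = apprv n (g * h).left.toAdd := apprG_left k n _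
    rw [hx, hy]
    have hV : (g * h).left.toAdd = g.left.toAdd + mA ℤ_[2] k g.right.toAdd *ᵥ h.left.toAdd :=
      mul_left_toAdd k g h
    have h1 : Dv (2*n) (apprv n g.left.toAdd + mA ℤ k g.right.toAdd *ᵥ apprv n h.left.toAdd)
        ((g * h).left.toAdd) := by
      rw [hV]
      exact Dv.add (apprv_spec n _) (Dv.mulVec k _ (apprv_spec n _))
    exact Dv.exists_bpow k n h1 (apprv_spec n _)

lemma phiFun_compat (g : ZSd (akUnit ℤ_[2] k)) :
    phiFun k g ∈ pronilCompletion (ZSd (akUnit ℤ k)) := by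
  intro n
  show nilTransition _ n (QuotientGroup.mk (apprG k (n+1) g)) = QuotientGroup.mk (apprG k n g)
  rw [nilTransition, QuotientGroup.map_mk, MonoidHom.id_apply]
  apply mk_eq_mk
  · rfl
  · rw [apprG_left, apprG_left]
    exact Dv.exists_bpow k n (apprv_spec n _)
      ((apprv_spec (n+1) _).mono (by omega))

/-- The homomorphism `ℤ ⋉ ℤ_[2]² →* lim_n G_k/γ_n G_k`. -/
noncomputable def Phi : ZSd (akUnit ℤ_[2] k) →* pronilCompletion (ZSd (akUnit ℤ k)) :=
  MonoidHom.mk' (fun g => ⟨phiFun k g, phiFun_compat k g⟩)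
    (fun g h => Subtype.ext (phiFun_mul k g h))

lemma norm_le_iff_dvd (x : ℤ_[2]) (l : ℕ) : ‖x‖ ≤ ((2⁻¹:ℝ))^l ↔ (2:ℤ_[2])^l ∣ x := by
  have h1 : ((2:ℕ):ℝ)^(-(l:ℤ)) = ((2⁻¹:ℝ))^l := by
    rw [_root_.zpow_neg, zpow_natCast, inv_pow]
    norm_num
  rw [← h1, PadicInt.norm_le_pow_iff_mem_span_pow, two_eq_cast, Ideal.mem_span_singleton]

lemma Phi_injective : Function.Injective (Phi k) := by
  rw [injective_iff_map_eq_one]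
  intro g hg
  have hmem : ∀ n, apprG k n g ∈ (⊤ : Subgroup (ZSd (akUnit ℤ k))).lowerCentralSeries n := by
    intro n
    apply (QuotientGroup.eq_one_iff _).mp
    have h0 := congrFun (congrArg Subtype.val hg) n
    exact h0
  have hr : g.right = 1 := (lcs_le_bSub k 0 (hmem 1)).1
  have hl : g.left.toAdd = 0 := by
    funext i
    apply padic_zero_of_forall_dvd
    intro m
    have h2 := (mem_twoPowSub k).mp (part2 k m (hmem (m+1)))
    have h3 : (2:ℤ)^m ∣ apprv (m+1) g.left.toAdd i := by
      have h4 := h2.2 i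
      rwa [apprG_left] at h4
    have h4 : (2:ℤ_[2])^m ∣ (g.left.toAdd i - (apprv (m+1) g.left.toAdd i : ℤ_[2])) :=
      (pow_dvd_pow _ (by omega : m ≤ 2*(m+1))).trans (apprv_spec (m+1) _ i)
    have h5 : (2:ℤ_[2])^m ∣ ((apprv (m+1) g.left.toAdd i : ℤ) : ℤ_[2]) :=
      (padic_int_dvd_iff m _).mpr h3
    have h6 := dvd_add h4 h5
    rwa [sub_add_cancel] at h6
  ext
  · rw [← ofAdd_toAdd g.left, hl]
    rfl
  · exact hr

lemma Phi_surjective : Function.Surjective (Phi k) := by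
  rintro ⟨f, hf⟩
  set gs : ℕ → ZSd (akUnit ℤ k) := fun n => (f n).out with hgs
  have hout : ∀ n, QuotientGroup.mk (gs n) = f n := fun n => QuotientGroup.out_eq' (f n)
  have key : ∀ m n, n ≤ m →
      (QuotientGroup.mk (gs m) : _ ⧸ (⊤ : Subgroup (ZSd (akUnit ℤ k))).lowerCentralSeries n) = f n := by
    intro m
    induction m with
    | zero =>
      intro n hn
      have h0 : n = 0 := Nat.le_zero.mp hn
      subst h0
      exact hout 0
    | succ m ih =>
      intro n hn
      rcases Nat.eq_or_lt_of_le hn with rfl | hlt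
      · exact hout (m+1)
      · have hn' : n ≤ m := Nat.lt_succ_iff.mp hlt
        have h1 : (QuotientGroup.mk (gs (m+1)) : _ ⧸ (⊤ : Subgroup (ZSd (akUnit ℤ k))).lowerCentralSeries m) = f m := by
          have h2 := hf m
          rw [← hout (m+1), nilTransition, QuotientGroup.map_mk, MonoidHom.id_apply] at h2
          exact h2
        have h3 : (gs m)⁻¹ * gs (m+1) ∈ (⊤ : Subgroup (ZSd (akUnit ℤ k))).lowerCentralSeries m :=
          QuotientGroup.eq.mp ((hout m).trans h1.symm)
        have h5 : (QuotientGroup.mk (gs m) : _ ⧸ (⊤ : Subgroup (ZSd (akUnit ℤ k))).lowerCentralSeries n)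
            = QuotientGroup.mk (gs (m+1)) :=
          QuotientGroup.eq.mpr ((⊤ : Subgroup (ZSd (akUnit ℤ k))).lowerCentralSeries_antitone hn' h3)
        rw [← h5]
        exact ih n hn'
  have hrel : ∀ n m, n + 1 ≤ m → (gs (n+1))⁻¹ * gs m ∈ bSub k (n+1) := by
    intro n m h
    apply lcs_le_bSub k n
    exact QuotientGroup.eq.mp ((hout (n+1)).trans (key m (n+1) h).symm)
  have hright : ∀ m, 1 ≤ m → (gs m).right = (gs 1).right := by
    intro m hm
    exact (quot_extract k (hrel 0 m hm)).1
  have hdvd : ∀ n m₁ m₂, n + 1 ≤ m₁ → m₁ ≤ m₂ → ∀ i : Fin 2,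
      (2:ℤ_[2])^n ∣ (((gs m₂).left.toAdd i : ℤ_[2]) - ((gs m₁).left.toAdd i : ℤ_[2])) := by
    intro n m₁ m₂ h1 h2 i
    obtain ⟨l, rfl⟩ : ∃ l, m₁ = l + 1 := ⟨m₁ - 1, by omega⟩
    obtain ⟨u, hu⟩ := (quot_extract k (hrel l m₂ (by omega))).2
    have hz : (2:ℤ)^l ∣ ((gs m₂).left.toAdd - (gs (l+1)).left.toAdd) i := by
      rw [hu]
      exact dvd_of_mem_bpow k l u i
    have hl' := (padic_int_dvd_iff l _).mpr hz
    refine (pow_dvd_pow _ (by omega : n ≤ l)).trans ?_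
    rwa [show ((((gs m₂).left.toAdd - (gs (l+1)).left.toAdd) i : ℤ) : ℤ_[2])
        = ((gs m₂).left.toAdd i : ℤ_[2]) - ((gs (l+1)).left.toAdd i : ℤ_[2]) by
      push_cast [Pi.sub_apply]; ring] at hl'
  set sq : Fin 2 → ℕ → ℤ_[2] := fun i m => ((gs m).left.toAdd i : ℤ_[2]) with hsq
  have hcauchy : ∀ i : Fin 2, ∃ w : ℤ_[2], Filter.Tendsto (sq i) Filter.atTop (nhds w) := by
    intro i
    apply cauchySeq_tendsto_of_complete
    apply cauchySeq_of_le_tendsto_0 (b := fun N => 2 * (2⁻¹:ℝ)^N)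
    · intro n m N hn hm
      cases N with
      | zero =>
        rw [dist_eq_norm]
        refine (PadicInt.norm_le_one _).trans (by norm_num)
      | succ l =>
        have hb : (2⁻¹:ℝ)^l = 2 * (2⁻¹:ℝ)^(l+1) := by ring
        rcases le_total n m with h | h
        · rw [dist_eq_norm, norm_sub_rev, ← hb]
          exact (norm_le_iff_dvd _ l).mpr (hdvd l n m hn h i)
        · rw [dist_eq_norm, ← hb]
          exact (norm_le_iff_dvd _ l).mpr (hdvd l m n hm h i)
    · have ht := (tendsto_pow_atTop_nhds_zero_of_lt_one
        (show (0:ℝ) ≤ 2⁻¹ by norm_num) (show (2⁻¹:ℝ) < 1 by norm_num)).const_mul (2:ℝ)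
      simpa using ht
  choose v hv using hcauchy
  have hlim : ∀ (i : Fin 2) (n m : ℕ), n + 1 ≤ m →
      (2:ℤ_[2])^n ∣ (v i - sq i m) := by
    intro i n m hm
    have hball : ∀ l, m ≤ l → sq i l ∈ Metric.closedBall (sq i m) ((2⁻¹:ℝ)^n) := by
      intro l hl
      rw [Metric.mem_closedBall, dist_eq_norm]
      exact (norm_le_iff_dvd _ n).mpr (hdvd n m l hm hl i)
    have hmem := Metric.isClosed_closedBall.mem_of_tendsto (hv i)
      (Filter.eventually_atTop.mpr ⟨m, hball⟩)
    rw [Metric.mem_closedBall, dist_eq_norm] at hmem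
    exact (norm_le_iff_dvd _ n).mp hmem
  refine ⟨⟨ofAdd (fun i => v i), (gs 1).right⟩, ?_⟩
  apply Subtype.ext
  funext n
  show QuotientGroup.mk (apprG k n ⟨ofAdd (fun i => v i), (gs 1).right⟩) = f n
  cases n with
  | zero =>
    haveI : Subsingleton ((ZSd (akUnit ℤ k)) ⧸ (⊤ : Subgroup (ZSd (akUnit ℤ k))).lowerCentralSeries 0) :=
      QuotientGroup.subsingleton_quotient_top
    exact Subsingleton.elim _ _
  | succ n =>
    rw [← key (2*n+3) (n+1) (by omega)]
    apply mk_eq_mk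
    · rw [apprG_right]
      show (gs 1).right = (gs (2*n+3)).right
      exact (hright (2*n+3) (by omega)).symm
    · rw [apprG_left]
      have hred : apprv (n+1)
            (toAdd (⟨ofAdd (fun i => v i), (gs 1).right⟩ : ZSd (akUnit ℤ_[2] k)).left)
          = apprv (n+1) (fun j => v j) := rfl
      rw [hred]
      apply mem_bpow_of_dvd
      intro i
      rw [← padic_int_dvd_iff]
      have d1 : (2:ℤ_[2])^(2*(n+1)) ∣ (v i - sq i (2*n+3)) :=
        hlim i (2*(n+1)) (2*n+3) (by omega)
      have d2 := apprv_spec (n+1) (fun j => v j) i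
      have d3 := dvd_sub d1 d2
      rw [show (v i - sq i (2*n+3)) - ((fun j => v j) i - (apprv (n+1) (fun j => v j) i : ℤ_[2]))
          = -((((gs (2*n+3)).left.toAdd - apprv (n+1) (fun j => v j)) i : ℤ) : ℤ_[2]) by
        push_cast [Pi.sub_apply, hsq]
        ring] at d3
      exact (dvd_neg.mp d3)

end Stmt15

/-- For odd `k` and `G_k = ℤ ⋉_{a_k} ℤ²`, the lower central series
filtration `γ_{n+1} G_k = 0 ⋉ b_k^n(ℤ²)` of `0 ⋉ ℤ²` is equivalent to the filtration
`0 ⋉ 2ⁿℤ²`, and consequently the pronilpotent completion `lim_n G_k/γ_{n+1}G_k` is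
isomorphic to `ℤ ⋉_{a_k} ℤ₂²`. -/
theorem stmt15 (k : ℤ) (hk : Odd k) :
    (∀ n : ℕ, ∃ m : ℕ, twoPowSub k m ≤ (⊤ : Subgroup (ZSd (akUnit ℤ k))).lowerCentralSeries n) ∧
    (∀ n : ℕ, ∃ m : ℕ, (⊤ : Subgroup (ZSd (akUnit ℤ k))).lowerCentralSeries m ≤ twoPowSub k n) ∧
    Nonempty ((pronilCompletion (ZSd (akUnit ℤ k))) ≃* ZSd (akUnit ℤ_[2] k)) := by
  refine ⟨fun n => ⟨2*n, Stmt15.part1 k n⟩, fun n => ⟨n+1, Stmt15.part2 k n⟩, ?_⟩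
  exact ⟨(MulEquiv.ofBijective (Stmt15.Phi k)
    ⟨Stmt15.Phi_injective k, Stmt15.Phi_surjective k⟩).symm⟩
end

section
/- Let k be odd and let ℤ act on H = ℤ² by the matrix a_k with rows (-1,k),(0,-1). Then the invariants H^ℤ = {v ∈ ℤ² : a_k v = v} are trivial, and the coinvariants H_ℤ = ℤ²/(a_k - I)(ℤ²) are isomorphic to ℤ/4. -/
/-!
`a_k - 1 = !![-2, k; 0, -2]` has determinant `4 ≠ 0`, so it is injective and the invariants
vanish. For the coinvariants, `v ↦ 2 v₀ + k v₁ mod 4` kills the image of `a_k - 1`, since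
`2 (-2 w₀ + k w₁) + k (-2 w₁) = -4 w₀`. Conversely, if `4 ∣ 2 v₀ + k v₁` with `k` odd, then
`v₁ = 2t` is even and `v₀ + k t = 2c`, so `v = (a_k - 1) (-c, -t)`. The map is onto because,
for `k = 2m + 1`, it sends `(-m, 1)` to the generator `1` of `ℤ/4`.
-/

open Matrix

lemma Matrix.fin_two_upperTriangular_sub_one {R : Type*} [Ring R] (a b d : R) :
    !![a, b; 0, d] - 1 = !![a - 1, b; 0, d - 1] := by
  rw [one_fin_two]
  ext i j
  fin_cases i <;> fin_cases j <;> simp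

def coinvariantsChar (k : ℤ) : (Fin 2 → ℤ) →+ ZMod 4 :=
  (Int.castAddHom (ZMod 4)).comp
    (AddMonoidHom.mk' (fun v => 2 * v 0 + k * v 1) fun v w => by simp only [Pi.add_apply]; ring)

lemma coinvariantsChar_apply (k : ℤ) (v : Fin 2 → ℤ) :
    coinvariantsChar k v = ((2 * v 0 + k * v 1 : ℤ) : ZMod 4) :=
  rfl

lemma coinvariantsChar_surjective {k : ℤ} (hk : Odd k) :
    Function.Surjective (coinvariantsChar k) := by
  obtain ⟨m, rfl⟩ := hk
  have h_one : coinvariantsChar (2 * m + 1) ![-m, 1] = 1 := by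
    simp [coinvariantsChar_apply]
  intro c
  refine ⟨c.val • ![-m, 1], ?_⟩
  rw [map_nsmul, h_one, nsmul_one, ZMod.natCast_zmod_val]

lemma mem_range_mulVecLin_iff {k : ℤ} (hk : Odd k) (v : Fin 2 → ℤ) :
    v ∈ LinearMap.range (mulVecLin !![(-2 : ℤ), k; 0, -2]) ↔
      (4 : ℤ) ∣ 2 * v 0 + k * v 1 := by
  simp only [LinearMap.mem_range, mulVecLin_apply, mulVec_fin_two, of_apply, cons_val',
    cons_val_zero, cons_val_one, cons_val_fin_one, empty_val']
  constructor
  · rintro ⟨w, rfl⟩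
    exact ⟨-w 0, by simp only [cons_val_zero, cons_val_one]; ring⟩
  · rintro ⟨c, hc⟩
    obtain ⟨m, rfl⟩ := hk
    obtain ⟨t, ht⟩ : Even (v 1) := ⟨2 * c - v 0 - m * v 1, by linarith⟩
    refine ⟨![-c, -t], ?_⟩
    ext i
    fin_cases i
    · have h_double : 2 * (2 * c - (2 * m + 1) * t) = 2 * v 0 := by
        linear_combination -hc + (2 * m + 1) * ht
      simp only [Fin.zero_eta, Fin.isValue, cons_val_zero, cons_val_one]
      linear_combination mul_left_cancel₀ two_ne_zero h_double
    · simp only [Fin.mk_one, Fin.isValue, cons_val_zero, cons_val_one]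
      linear_combination -ht

lemma range_mulVecLin_eq_ker_coinvariantsChar {k : ℤ} (hk : Odd k) :
    (LinearMap.range (mulVecLin !![(-2 : ℤ), k; 0, -2])).toAddSubgroup =
      (coinvariantsChar k).ker := by
  ext v
  rw [Submodule.mem_toAddSubgroup, mem_range_mulVecLin_iff hk, AddMonoidHom.mem_ker,
    coinvariantsChar_apply, ZMod.intCast_zmod_eq_zero_iff_dvd]
  rfl

/-- For odd `k`, with `ℤ` acting on `H = ℤ²` by `a_k = !![-1,k;0,-1]`:
the invariants `H^ℤ = ker (a_k - 1)` are trivial and the coinvariants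
`H_ℤ = ℤ²/(a_k - 1)(ℤ²)` are isomorphic to `ℤ/4`. -/
theorem stmt18 (k : ℤ) (hk : Odd k) :
    (∀ v : Fin 2 → ℤ, (!![(-1 : ℤ), k; 0, -1]).mulVec v = v → v = 0) ∧
    Nonempty (((Fin 2 → ℤ) ⧸
      (LinearMap.range (Matrix.mulVecLin (!![(-1 : ℤ), k; 0, -1] - 1))).toAddSubgroup)
        ≃+ ZMod 4) := by
  have h_sub_one : !![(-1 : ℤ), k; 0, -1] - 1 = !![-2, k; 0, -2] := by
    rw [fin_two_upperTriangular_sub_one]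
    norm_num
  refine ⟨fun v hv => ?_, ?_⟩
  · refine eq_zero_of_mulVec_eq_zero (M := !![(-2 : ℤ), k; 0, -2]) (by simp [det_fin_two_of]) ?_
    rw [← h_sub_one, sub_mulVec, hv, one_mulVec, sub_self]
  · rw [h_sub_one, range_mulVecLin_eq_ker_coinvariantsChar hk]
    exact ⟨QuotientAddGroup.quotientKerEquivOfSurjective _ (coinvariantsChar_surjective hk)⟩
end

section
/- Let k, l be odd integers and suppose φ'' ∈ GL_2(ℤ_2) satisfies φ'' a_k = a_l^{ε} φ'' where ε = ±1 and a_k, a_l are the matrices over ℤ_2 with rows (-1,k),(0,-1) and (-1,l),(0,-1). Then φ'' has the form with rows (αl, β), (0, αk) for some unit α ∈ ℤ_2^× and some β ∈ ℤ_2; in particular the lower-left entry of φ'' is zero and the diagonal entries d_1, d_2 satisfy k d_1 = ± l d_2. -/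
/-- Let `k, l` be odd and `φ'' ∈ GL₂(ℤ₂)` satisfy `φ'' a_k = a_l^ε φ''`
with `ε = ±1` (the second alternative `a_l φ'' a_k = φ''` encodes `ε = -1`,
i.e. `φ'' a_k = a_l⁻¹ φ''`). Then `φ''` is upper triangular of the form
`!![±αl, β; 0, αk]` for a unit `α` and some `β`; in particular its lower-left entry
vanishes and the diagonal entries satisfy `k·φ₀₀ = ±l·φ₁₁`. -/
theorem stmt19 (k l : ℤ) (hk : Odd k) (hl : Odd l)
    (φ : Matrix (Fin 2) (Fin 2) ℤ_[2]) (hφ : IsUnit φ)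
    (hcomm : φ * !![(-1 : ℤ_[2]), (k : ℤ_[2]); 0, -1] =
        !![(-1 : ℤ_[2]), (l : ℤ_[2]); 0, -1] * φ ∨
      !![(-1 : ℤ_[2]), (l : ℤ_[2]); 0, -1] * (φ * !![(-1 : ℤ_[2]), (k : ℤ_[2]); 0, -1]) = φ) :
    ∃ α β : ℤ_[2], IsUnit α ∧
      φ 1 0 = 0 ∧
      φ 0 1 = β ∧
      φ 1 1 = α * (k : ℤ_[2]) ∧
      (φ 0 0 = α * (l : ℤ_[2]) ∨ φ 0 0 = -(α * (l : ℤ_[2]))) ∧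
      ((k : ℤ_[2]) * φ 0 0 = (l : ℤ_[2]) * φ 1 1 ∨
        (k : ℤ_[2]) * φ 0 0 = -((l : ℤ_[2]) * φ 1 1)) := by
  -- k is a unit in ℤ_[2]
  have hku : IsUnit ((k : ℤ_[2])) := by
    rw [PadicInt.isUnit_iff]
    have h1 : ‖((k : ℤ_[2]))‖ ≤ 1 := PadicInt.norm_le_one _
    have h2 : ¬ ‖((k : ℤ_[2]))‖ < 1 := by
      rw [PadicInt.norm_int_lt_one_iff_dvd]
      intro h
      rw [← Int.not_even_iff_odd] at hk
      exact hk (by exact_mod_cast (even_iff_two_dvd).2 (by exact_mod_cast h))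
    linarith [lt_or_eq_of_le h1]
  have hkne : ((k : ℤ_[2])) ≠ 0 := hku.ne_zero
  -- derive c = 0 and k·a = ±l·d
  have key : φ 1 0 = 0 ∧ ((k : ℤ_[2]) * φ 0 0 = (l : ℤ_[2]) * φ 1 1 ∨
      (k : ℤ_[2]) * φ 0 0 = -((l : ℤ_[2]) * φ 1 1)) := by
    rcases hcomm with h | h
    · have h11 := congrFun (congrFun h 1) 1
      have h01 := congrFun (congrFun h 0) 1
      simp [Matrix.mul_apply, Fin.sum_univ_two] at h11 h01
      have hc : φ 1 0 = 0 := by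
        rcases h11 with h' | h'
        · exact h'
        · simp [h'] at hk
      refine ⟨hc, Or.inl ?_⟩
      linear_combination h01
    · have h11 := congrFun (congrFun h 1) 1
      have h01 := congrFun (congrFun h 0) 1
      simp [Matrix.mul_apply, Fin.sum_univ_two] at h11 h01
      have hc : φ 1 0 = 0 := by
        rcases h11 with h' | h'
        · exact h'
        · simp [h'] at hk
      refine ⟨hc, Or.inr ?_⟩
      linear_combination -h01 + (l : ℤ_[2]) * (k : ℤ_[2]) * hc
  obtain ⟨hc, hdiag⟩ := key
  obtain ⟨u, hu⟩ := hku
  set α : ℤ_[2] := φ 1 1 * ↑u⁻¹ with hα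
  have hαk : α * (k : ℤ_[2]) = φ 1 1 := by
    rw [hα, ← hu]
    rw [mul_assoc, Units.inv_mul, mul_one]
  have hdet : IsUnit (φ 0 0 * φ 1 1) := by
    have := (Matrix.isUnit_iff_isUnit_det φ).mp hφ
    rwa [Matrix.det_fin_two, hc, mul_zero, sub_zero] at this
  have hd : IsUnit (φ 1 1) := isUnit_of_mul_isUnit_right hdet
  have hαu : IsUnit α := hd.mul u⁻¹.isUnit
  refine ⟨α, φ 0 1, hαu, hc, rfl, hαk.symm, ?_, hdiag⟩
  rcases hdiag with h | h
  · left
    apply mul_left_cancel₀ hkne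
    rw [h, ← hαk]; ring
  · right
    apply mul_left_cancel₀ hkne
    rw [h, ← hαk]; ring
end
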